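/- arXiv:2005.06373 — 5 statements merged into one kernel-verified Lean document; each statement's English description precedes it below -/
import Mathlib

section
/- Let p be a prime and k, ℓ ≥ 0 integers. The number of subgroups of the abelian group Z_{p^k} × Z_{p^ℓ} equals Σ_{j=0}^{min(k,ℓ)} φ(p^j)(k−j+1)(ℓ−j+1), where φ denotes Euler's totient function. -/
open scoped BigOperators


section Glue

variable {G C : Type*} [AddCommGroup G] [AddCommGroup C]

/-- The subgroup of `G × C` built from a subgroup `P` of `G`, subgroup `K` of `C`,
and a hom `f : P →+ C ⧸ K`. -/
def glue (P : AddSubgroup G) (K : AddSubgroup C) (f : P →+ C ⧸ K) :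
    AddSubgroup (G × C) where
  carrier := {x | ∃ h : x.1 ∈ P, f ⟨x.1, h⟩ = (x.2 : C ⧸ K)}
  zero_mem' := ⟨P.zero_mem, by
    have h0 : f ⟨(0 : G × C).1, P.zero_mem⟩ = f 0 := congrArg f (Subtype.ext rfl)
    rw [h0, map_zero]
    simp⟩
  add_mem' := by
    rintro ⟨g1, c1⟩ ⟨g2, c2⟩ ⟨h1, hf1⟩ ⟨h2, hf2⟩
    refine ⟨P.add_mem h1 h2, ?_⟩
    have h0 : f ⟨((g1, c1) + (g2, c2)).1, P.add_mem h1 h2⟩ = f (⟨g1, h1⟩ + ⟨g2, h2⟩) :=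
      congrArg f (Subtype.ext rfl)
    rw [h0, map_add, hf1, hf2]
    simp
  neg_mem' := by
    rintro ⟨g, c⟩ ⟨h, hf⟩
    refine ⟨P.neg_mem h, ?_⟩
    have h0 : f ⟨(-(g, c)).1, P.neg_mem h⟩ = f (-(⟨g, h⟩ : P)) := congrArg f (Subtype.ext rfl)
    rw [h0, map_neg, hf]
    simp

lemma mem_glue {P : AddSubgroup G} {K : AddSubgroup C} {f : P →+ C ⧸ K} {g : G} {c : C} :
    (g, c) ∈ glue P K f ↔ ∃ h : g ∈ P, f ⟨g, h⟩ = (c : C ⧸ K) := Iff.rfl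

lemma mem_fst_of_mem_glue {P : AddSubgroup G} {K : AddSubgroup C} {f : P →+ C ⧸ K} {g : G} :
    g ∈ P ↔ ∃ c, (g, c) ∈ glue P K f := by
  constructor
  · intro hg
    obtain ⟨c, hc⟩ := QuotientAddGroup.mk_surjective (f ⟨g, hg⟩)
    exact ⟨c, hg, hc.symm ▸ rfl⟩
  · rintro ⟨c, h, _⟩
    exact h

lemma mem_snd_of_mem_glue {P : AddSubgroup G} {K : AddSubgroup C} {f : P →+ C ⧸ K} {c : C} :
    c ∈ K ↔ (0, c) ∈ glue P K f := by
  rw [mem_glue]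
  constructor
  · intro hc
    refine ⟨P.zero_mem, ?_⟩
    have h0 : ((⟨(0 : G), P.zero_mem⟩ : P)) = 0 := rfl
    rw [h0, map_zero, eq_comm, QuotientAddGroup.eq_zero_iff]
    exact hc
  · rintro ⟨h, hf⟩
    have h0 : ((⟨(0 : G), h⟩ : P)) = 0 := rfl
    rw [h0, map_zero, eq_comm, QuotientAddGroup.eq_zero_iff] at hf
    exact hf

lemma glue_injective :
    Function.Injective (fun s : Σ (P : AddSubgroup G) (K : AddSubgroup C), P →+ C ⧸ K =>
      glue s.1 s.2.1 s.2.2) := by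
  rintro ⟨P, K, f⟩ ⟨P', K', f'⟩ h
  simp only at h
  obtain rfl : P = P' := by
    ext g
    rw [mem_fst_of_mem_glue (K := K) (f := f), h, ← mem_fst_of_mem_glue]
  obtain rfl : K = K' := by
    ext c
    rw [mem_snd_of_mem_glue (f := f), h, ← mem_snd_of_mem_glue]
  suffices hf : f = f' by rw [hf]
  ext x
  obtain ⟨c, hc⟩ := QuotientAddGroup.mk_surjective (f x)
  have hx : (x.1, c) ∈ glue P K f := ⟨x.2, by rw [Subtype.coe_eta]; exact hc.symm⟩
  rw [h] at hx
  obtain ⟨h', hf'⟩ := hx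
  have : (⟨x.1, h'⟩ : P) = x := Subtype.ext rfl
  rw [this] at hf'
  rw [hf', hc]

lemma glue_surjective :
    Function.Surjective (fun s : Σ (P : AddSubgroup G) (K : AddSubgroup C), P →+ C ⧸ K =>
      glue s.1 s.2.1 s.2.2) := by
  intro H
  set P : AddSubgroup G := H.map (AddMonoidHom.fst G C) with hP
  set K : AddSubgroup C := H.comap (AddMonoidHom.inr G C) with hK
  have memK : ∀ c : C, c ∈ K ↔ (0, c) ∈ H := fun c => Iff.rfl
  have hPex : ∀ x : P, ∃ c : C, ((x : G), c) ∈ H := by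
    rintro ⟨g, hg⟩
    obtain ⟨⟨g', c⟩, hmem, heq⟩ := hg
    have : g' = g := heq
    subst this
    exact ⟨c, hmem⟩
  choose sec hsec using hPex
  have hdiff : ∀ (x : P) (c : C), ((x : G), c) ∈ H → (sec x : C ⧸ K) = (c : C ⧸ K) := by
    intro x c hc
    rw [QuotientAddGroup.eq]
    have := H.add_mem (H.neg_mem (hsec x)) hc
    simpa [memK, Prod.ext_iff] using this
  refine ⟨⟨P, K, AddMonoidHom.mk' (fun x => (sec x : C ⧸ K)) ?_⟩, ?_⟩
  · intro x y
    show ((sec (x + y) : C) : C ⧸ K) = (sec x : C ⧸ K) + (sec y : C ⧸ K)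
    have hmem : (((x + y : P) : G), sec x + sec y) ∈ H := by
      have := H.add_mem (hsec x) (hsec y)
      simpa [Prod.ext_iff] using this
    rw [hdiff (x + y) _ hmem]
    simp [QuotientAddGroup.mk_add]
  · ext ⟨g, c⟩
    simp only [mem_glue]
    constructor
    · rintro ⟨hg, hf⟩
      simp only [AddMonoidHom.mk'_apply] at hf
      have h1 : ((⟨g, hg⟩ : P) : G) = g := rfl
      have h2 := hsec ⟨g, hg⟩
      rw [h1] at h2
      rw [QuotientAddGroup.eq] at hf
      have h3 : (0, -sec ⟨g, hg⟩ + c) ∈ H := (memK _).1 hf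
      have := H.add_mem h2 h3
      simpa using this
    · intro hgc
      have hg : g ∈ P := ⟨(g, c), hgc, rfl⟩
      refine ⟨hg, ?_⟩
      simp only [AddMonoidHom.mk'_apply]
      exact hdiff ⟨g, hg⟩ c hgc


lemma nat_card_sigma {ι : Type*} [Fintype ι] (F : ι → Type*) [∀ i, Finite (F i)] :
    Nat.card (Σ i, F i) = ∑ i, Nat.card (F i) := by
  classical
  letI : ∀ i, Fintype (F i) := fun i => Fintype.ofFinite _
  simp [Nat.card_eq_fintype_card, Fintype.card_sigma]

/-- The `d`-torsion subgroup of `ZMod n`. -/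
def tors (n d : ℕ) : AddSubgroup (ZMod n) := (AddMonoidHom.mulLeft ((d : ℕ) : ZMod n)).ker

lemma mem_tors {n d : ℕ} {x : ZMod n} : x ∈ tors n d ↔ ((d : ℕ) : ZMod n) * x = 0 := Iff.rfl

lemma range_mulLeft (n d : ℕ) :
    (AddMonoidHom.mulLeft ((d : ℕ) : ZMod n)).range
      = AddSubgroup.zmultiples ((d : ℕ) : ZMod n) := by
  ext y
  simp only [AddMonoidHom.mem_range, AddSubgroup.mem_zmultiples_iff,
    AddMonoidHom.coe_mulLeft]
  constructor
  · rintro ⟨x, rfl⟩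
    obtain ⟨z, rfl⟩ := ZMod.intCast_surjective x
    exact ⟨z, by rw [zsmul_eq_mul]; ring⟩
  · rintro ⟨z, rfl⟩
    exact ⟨(z : ZMod n), by rw [zsmul_eq_mul]; ring⟩

lemma card_tors (n d : ℕ) (hn : n ≠ 0) : Nat.card (tors n d) = n.gcd d := by
  haveI : NeZero n := ⟨hn⟩
  have h1 := AddSubgroup.card_eq_card_quotient_mul_card_addSubgroup (tors n d)
  have h2 : Nat.card (ZMod n ⧸ tors n d)
      = Nat.card (AddMonoidHom.mulLeft ((d : ℕ) : ZMod n)).range :=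
    Nat.card_congr (QuotientAddGroup.quotientKerEquivRange _).toEquiv
  rw [range_mulLeft] at h2
  have h3 : Nat.card (AddSubgroup.zmultiples ((d : ℕ) : ZMod n)) = n / n.gcd d := by
    rw [Nat.card_zmultiples, ZMod.addOrderOf_coe d hn]
  rw [h2, h3, Nat.card_zmod] at h1
  have hg : n.gcd d ∣ n := Nat.gcd_dvd_left _ _
  have hq : n / n.gcd d ≠ 0 := by
    have := Nat.div_pos (Nat.le_of_dvd (Nat.pos_of_ne_zero hn) hg)
      (Nat.gcd_pos_of_pos_left d (Nat.pos_of_ne_zero hn))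
    omega
  have hn' : n = (n / n.gcd d) * n.gcd d := (Nat.div_mul_cancel hg).symm
  refine (Nat.eq_of_mul_eq_mul_left (Nat.pos_of_ne_zero hq) ?_).symm
  rw [← h1, Nat.div_mul_cancel hg]

lemma addSubgroup_zmod_eq_tors {n : ℕ} (hn : n ≠ 0) (H : AddSubgroup (ZMod n)) :
    H = tors n (Nat.card H) := by
  haveI : NeZero n := ⟨hn⟩
  have hdvd : Nat.card H ∣ n := by
    simpa [Nat.card_zmod] using AddSubgroup.card_addSubgroup_dvd_card H
  have hle : H ≤ tors n (Nat.card H) := by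
    intro x hx
    rw [mem_tors]
    have h1 : (Nat.card H) • (⟨x, hx⟩ : H) = 0 := card_nsmul_eq_zero'
    have h2 : (Nat.card H) • x = 0 := by
      have h3 := congrArg (Subtype.val) h1
      rwa [AddSubmonoidClass.coe_nsmul] at h3
    rwa [nsmul_eq_mul] at h2
  refine AddSubgroup.eq_of_le_of_card_ge hle ?_
  rw [card_tors _ _ hn, Nat.gcd_eq_right hdvd]


lemma card_hom_zmod (m n : ℕ) (hn : n ≠ 0) :
    Nat.card (ZMod m →+ ZMod n) = n.gcd m := by
  haveI : NeZero n := ⟨hn⟩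
  have e1 : (ZMod m →+ ZMod n) ≃ {f : ℤ →+ ZMod n // f (m : ℤ) = 0} := (ZMod.lift m).symm
  have e2 : {f : ℤ →+ ZMod n // f (m : ℤ) = 0} ≃ {x : ZMod n // ((m : ℕ) : ZMod n) * x = 0} := by
    refine (zmultiplesHom (ZMod n)).symm.subtypeEquiv fun f => ?_
    rw [zmultiplesHom_symm_apply]
    have h1 : ((m : ℤ) : ℤ) = (m : ℤ) • (1 : ℤ) := by simp
    rw [h1, map_zsmul, zsmul_eq_mul]
    push_cast
    rfl
  have e3 : {x : ZMod n // ((m : ℕ) : ZMod n) * x = 0} ≃ tors n m :=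
    Equiv.subtypeEquivRight fun x => mem_tors.symm
  rw [Nat.card_congr (e1.trans (e2.trans e3)), card_tors _ _ hn]

lemma card_hom_cyclic (A B : Type*) [AddCommGroup A] [AddCommGroup B] [Finite A] [Finite B]
    [hA : IsAddCyclic A] [hB : IsAddCyclic B] :
    Nat.card (A →+ B) = (Nat.card B).gcd (Nat.card A) := by
  have e1 := zmodAddCyclicAddEquiv hA
  have e2 := zmodAddCyclicAddEquiv hB
  have e : (A →+ B) ≃ (ZMod (Nat.card A) →+ ZMod (Nat.card B)) :=
    (AddEquiv.addMonoidHomCongrLeftEquiv e1.symm).trans (AddEquiv.addMonoidHomCongrRightEquiv e2.symm)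
  rw [Nat.card_congr e, card_hom_zmod _ _ Nat.card_pos.ne']


lemma tot_sum (p : ℕ) (hp : p.Prime) (m : ℕ) :
    ∑ j ∈ Finset.range (m + 1), Nat.totient (p ^ j) = p ^ m := by
  induction m with
  | zero => simp
  | succ m ih =>
    rw [Finset.sum_range_succ, ih, Nat.totient_prime_pow hp (Nat.succ_pos m)]
    have h1 : p ^ (m + 1 - 1) = p ^ m := by simp
    rw [h1]
    have hp1 : 1 ≤ p := hp.pos
    calc p ^ m + p ^ m * (p - 1) = p ^ m * (1 + (p - 1)) := by ring
    _ = p ^ m * p := by rw [show 1 + (p - 1) = p by omega]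
    _ = p ^ (m + 1) := by ring

lemma key_identity (p : ℕ) (hp : p.Prime) (k l : ℕ) :
    ∑ a ∈ Finset.range (k + 1), ∑ b ∈ Finset.range (l + 1), p ^ (min a b)
      = ∑ j ∈ Finset.range (min k l + 1),
          Nat.totient (p ^ j) * (k - j + 1) * (l - j + 1) := by
  have step1 : ∀ a ∈ Finset.range (k + 1), ∀ b ∈ Finset.range (l + 1),
      p ^ (min a b) = ∑ j ∈ Finset.range (min k l + 1),
        if j ≤ a ∧ j ≤ b then Nat.totient (p ^ j) else 0 := by
    intro a ha b hb
    simp only [Finset.mem_range] at ha hb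
    have hfil : (Finset.range (min k l + 1)).filter (fun j => j ≤ a ∧ j ≤ b)
        = Finset.range (min a b + 1) := by
      ext j
      simp only [Finset.mem_filter, Finset.mem_range]
      omega
    rw [← Finset.sum_filter, hfil, tot_sum p hp]
  calc ∑ a ∈ Finset.range (k + 1), ∑ b ∈ Finset.range (l + 1), p ^ (min a b)
      = ∑ a ∈ Finset.range (k + 1), ∑ b ∈ Finset.range (l + 1),
          ∑ j ∈ Finset.range (min k l + 1),
            if j ≤ a ∧ j ≤ b then Nat.totient (p ^ j) else 0 :=
        Finset.sum_congr rfl fun a ha => Finset.sum_congr rfl fun b hb => step1 a ha b hb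
  _ = ∑ j ∈ Finset.range (min k l + 1), ∑ a ∈ Finset.range (k + 1),
        ∑ b ∈ Finset.range (l + 1), if j ≤ a ∧ j ≤ b then Nat.totient (p ^ j) else 0 := by
      have h1 : ∀ a : ℕ, ∑ b ∈ Finset.range (l + 1), ∑ j ∈ Finset.range (min k l + 1),
            (if j ≤ a ∧ j ≤ b then Nat.totient (p ^ j) else 0)
          = ∑ j ∈ Finset.range (min k l + 1), ∑ b ∈ Finset.range (l + 1),
            (if j ≤ a ∧ j ≤ b then Nat.totient (p ^ j) else 0) := fun a => Finset.sum_comm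
      simp_rw [h1]
      exact Finset.sum_comm
  _ = ∑ j ∈ Finset.range (min k l + 1),
        Nat.totient (p ^ j) * (k - j + 1) * (l - j + 1) := by
      refine Finset.sum_congr rfl fun j hj => ?_
      simp only [Finset.mem_range] at hj
      have hjk : j ≤ k := by omega
      have hjl : j ≤ l := by omega
      have hB : ∑ b ∈ Finset.range (l + 1), (if j ≤ b then Nat.totient (p ^ j) else 0)
          = Nat.totient (p ^ j) * (l - j + 1) := by
        rw [← Finset.sum_filter]
        have hfil : (Finset.range (l + 1)).filter (fun b => j ≤ b) = Finset.Ico j (l + 1) := by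
          ext b
          simp only [Finset.mem_filter, Finset.mem_range, Finset.mem_Ico]
          omega
        rw [hfil, Finset.sum_const, Nat.card_Ico, smul_eq_mul]
        rw [show l + 1 - j = l - j + 1 by omega, Nat.mul_comm]
      have hA : ∀ a : ℕ, ∑ b ∈ Finset.range (l + 1),
            (if j ≤ a ∧ j ≤ b then Nat.totient (p ^ j) else 0)
          = if j ≤ a then Nat.totient (p ^ j) * (l - j + 1) else 0 := by
        intro a
        by_cases h : j ≤ a
        · simp only [h, true_and, if_true]
          exact hB
        · simp [h]
      simp_rw [hA]
      rw [← Finset.sum_filter]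
      have hfil : (Finset.range (k + 1)).filter (fun a => j ≤ a) = Finset.Ico j (k + 1) := by
        ext a
        simp only [Finset.mem_filter, Finset.mem_range, Finset.mem_Ico]
        omega
      rw [hfil, Finset.sum_const, Nat.card_Ico, smul_eq_mul]
      rw [show k + 1 - j = k - j + 1 by omega]
      ring

section Main

lemma gcd_pow_pow (p : ℕ) (s t : ℕ) : Nat.gcd (p ^ s) (p ^ t) = p ^ min s t := by
  rcases le_total s t with h | h
  · rw [min_eq_left h, Nat.gcd_eq_left (pow_dvd_pow p h)]
  · rw [min_eq_right h, Nat.gcd_eq_right (pow_dvd_pow p h)]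

/-- **Lemma 2.1 (Călugăreanu).** The number of subgroups of `Z_{p^k} × Z_{p^ℓ}` is
`∑_{j=0}^{min(k,ℓ)} φ(p^j)(k−j+1)(ℓ−j+1)`. -/
theorem card_subgroups_of_p_group_rank_two (p : ℕ) (hp : p.Prime) (k l : ℕ) :
    Nat.card (AddSubgroup (ZMod (p ^ k) × ZMod (p ^ l))) =
      ∑ j ∈ Finset.range (min k l + 1),
        Nat.totient (p ^ j) * (k - j + 1) * (l - j + 1) := by
  have hp0 : p ≠ 0 := hp.pos.ne'
  haveI hne1 : NeZero (p ^ k) := ⟨pow_ne_zero _ hp0⟩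
  haveI hne2 : NeZero (p ^ l) := ⟨pow_ne_zero _ hp0⟩
  -- the torsion subgroups have the expected cardinality
  have cardtors : ∀ (m a : ℕ), a ≤ m → Nat.card (tors (p ^ m) (p ^ a)) = p ^ a := by
    intro m a ham
    rw [card_tors _ _ (pow_ne_zero _ hp0), Nat.gcd_eq_right (pow_dvd_pow p ham)]
  -- enumeration of the subgroups of `ZMod (p ^ m)`
  have enum : ∀ m : ℕ, Function.Bijective
      (fun a : Fin (m + 1) => tors (p ^ m) (p ^ (a : ℕ))) := by
    intro m
    constructor
    · intro a a' h
      have h' : tors (p ^ m) (p ^ (a : ℕ)) = tors (p ^ m) (p ^ (a' : ℕ)) := h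
      have h2 : (p : ℕ) ^ (a : ℕ) = p ^ (a' : ℕ) := by
        rw [← cardtors m a (by omega), ← cardtors m a' (by omega), h']
      exact Fin.ext (Nat.pow_right_injective hp.two_le h2)
    · intro H
      have hdvd : Nat.card H ∣ p ^ m := by
        simpa [Nat.card_zmod] using AddSubgroup.card_addSubgroup_dvd_card H
      obtain ⟨a, ham, hcard⟩ := (Nat.dvd_prime_pow hp).1 hdvd
      refine ⟨⟨a, by omega⟩, ?_⟩
      simp only
      rw [← hcard, ← addSubgroup_zmod_eq_tors (pow_ne_zero _ hp0) H]
  let eA : Fin (k + 1) ≃ AddSubgroup (ZMod (p ^ k)) := Equiv.ofBijective _ (enum k)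
  let eB : Fin (l + 1) ≃ AddSubgroup (ZMod (p ^ l)) := Equiv.ofBijective _ (enum l)
  -- step 1 : subgroups of the product are a sigma type
  have e1 : AddSubgroup (ZMod (p ^ k) × ZMod (p ^ l)) ≃
      Σ (P : AddSubgroup (ZMod (p ^ k))) (K : AddSubgroup (ZMod (p ^ l))),
        (P →+ ZMod (p ^ l) ⧸ K) :=
    (Equiv.ofBijective _ ⟨glue_injective, glue_surjective⟩).symm
  -- step 2 : reindex the sigma type by `Fin (k+1) × Fin (l+1)`
  have e2' : (Σ (a : Fin (k + 1)) (b : Fin (l + 1)),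
        ((tors (p ^ k) (p ^ (a : ℕ))) →+ ZMod (p ^ l) ⧸ (tors (p ^ l) (p ^ (b : ℕ)))))
      ≃ Σ (P : AddSubgroup (ZMod (p ^ k))) (K : AddSubgroup (ZMod (p ^ l))),
        (P →+ ZMod (p ^ l) ⧸ K) :=
    (Equiv.sigmaCongrRight fun a : Fin (k + 1) =>
        Equiv.sigmaCongrLeft
          (β := fun K : AddSubgroup (ZMod (p ^ l)) =>
            ((tors (p ^ k) (p ^ (a : ℕ))) →+ ZMod (p ^ l) ⧸ K)) eB).trans
      (Equiv.sigmaCongrLeft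
        (β := fun P : AddSubgroup (ZMod (p ^ k)) =>
          Σ K : AddSubgroup (ZMod (p ^ l)), (P →+ ZMod (p ^ l) ⧸ K)) eA)
  have e2 := e2'.symm
  haveI homfin : ∀ (a : Fin (k + 1)) (b : Fin (l + 1)),
      Finite ((tors (p ^ k) (p ^ (a : ℕ))) →+ ZMod (p ^ l) ⧸ (tors (p ^ l) (p ^ (b : ℕ)))) :=
    fun a b => Finite.of_injective _ DFunLike.coe_injective
  rw [Nat.card_congr (e1.trans e2), nat_card_sigma]
  have hterm : ∀ (a : Fin (k + 1)) (b : Fin (l + 1)),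
      Nat.card ((tors (p ^ k) (p ^ (a : ℕ))) →+ ZMod (p ^ l) ⧸ (tors (p ^ l) (p ^ (b : ℕ))))
        = p ^ (min (l - (b : ℕ)) (a : ℕ)) := by
    intro a b
    haveI : IsAddCyclic (ZMod (p ^ l) ⧸ (tors (p ^ l) (p ^ (b : ℕ)))) :=
      isAddCyclic_of_surjective (QuotientAddGroup.mk' _) (QuotientAddGroup.mk'_surjective _)
    rw [card_hom_cyclic]
    have hca : Nat.card (tors (p ^ k) (p ^ (a : ℕ))) = p ^ (a : ℕ) :=
      cardtors k a (by omega)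
    have hcb : Nat.card (tors (p ^ l) (p ^ (b : ℕ))) = p ^ (b : ℕ) :=
      cardtors l b (by omega)
    have hq : Nat.card (ZMod (p ^ l) ⧸ (tors (p ^ l) (p ^ (b : ℕ)))) = p ^ (l - (b : ℕ)) := by
      have h := AddSubgroup.card_eq_card_quotient_mul_card_addSubgroup
        (tors (p ^ l) (p ^ (b : ℕ)))
      rw [Nat.card_zmod, hcb] at h
      have hsplit : p ^ l = p ^ (l - (b : ℕ)) * p ^ (b : ℕ) := by
        rw [← pow_add]
        congr 1
        omega
      have h2 : Nat.card (ZMod (p ^ l) ⧸ (tors (p ^ l) (p ^ (b : ℕ)))) * p ^ (b : ℕ)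
          = p ^ (l - (b : ℕ)) * p ^ (b : ℕ) := by rw [← h, ← hsplit]
      exact Nat.eq_of_mul_eq_mul_right (pow_pos hp.pos _) h2
    rw [hq, hca, gcd_pow_pow p _ _]
  simp only [nat_card_sigma, hterm]
  -- turn the `Fin` sums into `range` sums
  rw [Fin.sum_univ_eq_sum_range (fun a => ∑ b : Fin (l + 1), p ^ (min (l - (b : ℕ)) a))]
  have hb : ∀ a : ℕ, ∑ b : Fin (l + 1), p ^ (min (l - (b : ℕ)) a)
      = ∑ b ∈ Finset.range (l + 1), p ^ (min a b) := by
    intro a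
    rw [Fin.sum_univ_eq_sum_range (fun b => p ^ (min (l - b) a))]
    have := Finset.sum_range_reflect (fun b => p ^ (min a b)) (l + 1)
    simp only [Nat.add_sub_cancel] at this
    rw [← this]
    refine Finset.sum_congr rfl fun b hb => ?_
    rw [min_comm]
  simp only [hb]
  exact key_identity p hp k l

end Main
end Glue
end

section
/- Let p and q be distinct primes with p − 1 = ∏_{i=1}^n r_i^{k_i} and q − 1 = ∏_{i=1}^n r_i^{ℓ_i}, where r_1, …, r_n are distinct primes and k_i, ℓ_i ≥ 0. Then the number of subgroups of the abelian group Z_{p−1} × Z_{q−1} equals ∏_{i=1}^n Σ_{j=0}^{min(k_i,ℓ_i)} φ(r_i^j)(k_i−j+1)(ℓ_i−j+1), where φ denotes Euler's totient function. -/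
open AddSubgroup Finset
namespace AuxCount



lemma closure_neg_singleton {G : Type*} [AddGroup G] (x : G) :
    closure ({-x} : Set G) = closure {x} := by
  apply le_antisymm
  · rw [closure_le]
    rintro y rfl
    exact neg_mem (subset_closure rfl)
  · rw [closure_le]
    rintro y rfl
    simpa using neg_mem (subset_closure (Set.mem_singleton (-x)))

lemma mem_closure_cast_iff {n : ℕ} [NeZero n] {c : ℕ} (hc : c ∣ n) (y : ZMod n) :
    y ∈ AddSubgroup.closure {(c : ZMod n)} ↔ c ∣ y.val := by
  rw [mem_closure_singleton]
  constructor
  · rintro ⟨s, rfl⟩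
    have h1 : s • (c : ZMod n) = ((((s : ZMod n)).val * c : ℕ) : ZMod n) := by
      rw [zsmul_eq_mul]
      push_cast
      rw [ZMod.natCast_val, ZMod.cast_id]
    rw [h1, ZMod.val_natCast]
    exact (Nat.dvd_mod_iff hc).mpr (dvd_mul_left c _)
  · intro h
    refine ⟨((y.val / c : ℕ) : ℤ), ?_⟩
    have h2 : ((y.val / c : ℕ) : ℤ) • (c : ZMod n) = ((y.val / c * c : ℕ) : ZMod n) := by
      rw [zsmul_eq_mul, Int.cast_natCast, ← Nat.cast_mul]
    rw [h2, Nat.div_mul_cancel h, ZMod.natCast_val, ZMod.cast_id]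

lemma card_closure_cast {n : ℕ} [NeZero n] {c : ℕ} (hc : c ∣ n) :
    Nat.card (AddSubgroup.closure {(c : ZMod n)} : AddSubgroup (ZMod n)) = n / c := by
  have h1 : (closure {(c : ZMod n)} : AddSubgroup (ZMod n)) = zmultiples (c : ZMod n) :=
    (zmultiples_eq_closure _).symm
  rw [h1, Nat.card_zmultiples, ZMod.addOrderOf_coe _ (NeZero.ne n),
    Nat.gcd_eq_right hc]

lemma exists_closure_cast {n : ℕ} [NeZero n] (A : AddSubgroup (ZMod n)) :
    ∃ c : ℕ, c ∣ n ∧ A = AddSubgroup.closure {(c : ZMod n)} := by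
  obtain ⟨a, ha⟩ := Int.subgroup_cyclic (A.comap (Int.castAddHom (ZMod n)))
  have hsurj : Function.Surjective (Int.castAddHom (ZMod n)) := ZMod.intCast_surjective
  have hA : A = (A.comap (Int.castAddHom (ZMod n))).map (Int.castAddHom (ZMod n)) :=
    (AddSubgroup.map_comap_eq_self_of_surjective hsurj A).symm
  have hmem : (n : ℤ) ∈ A.comap (Int.castAddHom (ZMod n)) := by
    simp only [AddSubgroup.mem_comap, Int.coe_castAddHom, Int.cast_natCast,
      ZMod.natCast_self]
    exact zero_mem A
  rw [ha, mem_closure_singleton] at hmem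
  obtain ⟨s, hs⟩ := hmem
  have hdvd : a ∣ (n : ℤ) := ⟨s, by rw [← hs, smul_eq_mul, mul_comm]⟩
  refine ⟨a.natAbs, ?_, ?_⟩
  · have := Int.natAbs_dvd_natAbs.mpr hdvd
    simpa using this
  · rw [hA, ha, AddMonoidHom.map_closure, Set.image_singleton]
    have hcoe : (Int.castAddHom (ZMod n)) a = ((a : ℤ) : ZMod n) := rfl
    rw [hcoe]
    rcases Int.natAbs_eq a with h | h
    · have h2 : ((a : ℤ) : ZMod n) = ((a.natAbs : ℕ) : ZMod n) := by
        conv_lhs => rw [h]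
        exact Int.cast_natCast _
      rw [h2]
    · have h2 : ((a : ℤ) : ZMod n) = -((a.natAbs : ℕ) : ZMod n) := by
        conv_lhs => rw [h]
        rw [Int.cast_neg, Int.cast_natCast]
      rw [h2, closure_neg_singleton]



open AddSubgroup



variable (m n : ℕ) [NeZero m] [NeZero n]

/-- The subgroup of `ZMod m × ZMod n` generated by `(m/a, t)` and `(0, c)`. -/
def F (a c t : ℕ) : AddSubgroup (ZMod m × ZMod n) :=
  AddSubgroup.closure {(((m / a : ℕ) : ZMod m), (t : ZMod n)), ((0 : ZMod m), (c : ZMod n))}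

lemma mem_F {a c t : ℕ} {z : ZMod m × ZMod n} :
    z ∈ F m n a c t ↔ ∃ s u : ℤ,
      s • (((m / a : ℕ) : ZMod m), (t : ZMod n)) + u • ((0 : ZMod m), (c : ZMod n)) = z :=
  AddSubgroup.mem_closure_pair

lemma F_map_fst (a c t : ℕ) :
    (F m n a c t).map (AddMonoidHom.fst (ZMod m) (ZMod n)) =
      AddSubgroup.closure {((m / a : ℕ) : ZMod m)} := by
  rw [F, AddMonoidHom.map_closure, Set.image_pair]
  apply le_antisymm
  · rw [closure_le]
    rintro y (rfl | rfl)
    · exact AddSubgroup.subset_closure rfl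
    · exact zero_mem _
  · exact closure_mono (Set.singleton_subset_iff.mpr (Set.mem_insert _ _))

lemma addOrderOf_gen {a : ℕ} (ha : a ∣ m) :
    addOrderOf (((m / a : ℕ)) : ZMod m) = a := by
  rw [ZMod.addOrderOf_coe _ (NeZero.ne m), Nat.gcd_eq_right (Nat.div_dvd_of_dvd ha),
    Nat.div_div_self ha (NeZero.ne m)]

set_option maxHeartbeats 1000000 in
lemma F_comap_inr {a c t : ℕ} (ha : a ∣ m) (hc : c ∣ n) (hct : c ∣ a * t) :
    (F m n a c t).comap (AddMonoidHom.inr (ZMod m) (ZMod n)) =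
      AddSubgroup.closure {(c : ZMod n)} := by
  have hat : ((a * t : ℕ) : ZMod n) ∈ AddSubgroup.closure {(c : ZMod n)} := by
    rw [mem_closure_cast_iff hc, ZMod.val_natCast]
    exact (Nat.dvd_mod_iff hc).mpr hct
  ext y
  simp only [AddSubgroup.mem_comap, AddMonoidHom.inr_apply]
  rw [mem_F]
  constructor
  · rintro ⟨s, u, h⟩
    have h1 : s • ((m / a : ℕ) : ZMod m) = 0 := by
      have := congrArg Prod.fst h
      simpa using this
    have h2 : s • (t : ZMod n) + u • (c : ZMod n) = y := by
      have := congrArg Prod.snd h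
      simpa using this
    have has : ((a : ℕ) : ℤ) ∣ s := by
      rw [← addOrderOf_gen m ha]
      exact addOrderOf_dvd_iff_zsmul_eq_zero.mpr h1
    obtain ⟨v, rfl⟩ := has
    rw [← h2]
    have hcc : (c : ZMod n) ∈ AddSubgroup.closure {(c : ZMod n)} :=
      AddSubgroup.subset_closure rfl
    have key : (((a : ℕ) : ℤ) * v) • (t : ZMod n) = v • (((a * t : ℕ)) : ZMod n) := by
      rw [mul_comm, mul_zsmul, natCast_zsmul, nsmul_eq_mul, ← Nat.cast_mul]
    rw [key]
    exact add_mem (AddSubgroup.zsmul_mem _ hat v) (AddSubgroup.zsmul_mem _ hcc u)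
  · intro hy
    obtain ⟨u, hu⟩ := mem_closure_singleton.mp hy
    refine ⟨0, u, ?_⟩
    rw [Prod.ext_iff]
    constructor
    · simp
    · simpa using hu




lemma F_surj (H : AddSubgroup (ZMod m × ZMod n)) :
    ∃ a c t : ℕ, a ∣ m ∧ c ∣ n ∧ t < c ∧ c ∣ a * t ∧ F m n a c t = H := by
  obtain ⟨d, hd, hfst⟩ := exists_closure_cast (H.map (AddMonoidHom.fst (ZMod m) (ZMod n)))
  obtain ⟨c, hc, hker⟩ := exists_closure_cast (H.comap (AddMonoidHom.inr (ZMod m) (ZMod n)))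
  have hc0 : c ≠ 0 := by rintro rfl; exact NeZero.ne n (Nat.eq_zero_of_zero_dvd hc)
  set a := m / d with hadef
  have ha : a ∣ m := Nat.div_dvd_of_dvd hd
  have hda : m / a = d := Nat.div_div_self hd (NeZero.ne m)
  have hadm : (a * d : ℕ) = m := Nat.div_mul_cancel hd
  have hdm : ((d : ZMod m)) ∈ H.map (AddMonoidHom.fst (ZMod m) (ZMod n)) := by
    rw [hfst]; exact AddSubgroup.subset_closure rfl
  obtain ⟨h, hH, hh1⟩ := AddSubgroup.mem_map.mp hdm
  have hh1' : h.1 = (d : ZMod m) := hh1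
  set t := h.2.val % c with htdef
  have htc : t < c := Nat.mod_lt _ (Nat.pos_of_ne_zero hc0)
  have hval : ((h.2.val : ℕ) : ZMod n) = h.2 := by rw [ZMod.natCast_val, ZMod.cast_id]
  have hsplit : h.2.val = c * (h.2.val / c) + t := (Nat.div_add_mod h.2.val c).symm
  have hKmem : ∀ y : ZMod n, ((0 : ZMod m), y) ∈ H ↔ c ∣ y.val := by
    intro y
    have h1 : (((0 : ZMod m), y) ∈ H) ↔
        y ∈ H.comap (AddMonoidHom.inr (ZMod m) (ZMod n)) := Iff.rfl
    rw [h1, hker, mem_closure_cast_iff hc]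
  -- `a • h` has trivial first component
  have hmem2' : ((a : ℕ) : ℤ) • h ∈ H := AddSubgroup.zsmul_mem _ hH _
  have hcomp : ((a : ℕ) : ℤ) • h = ((0 : ZMod m), ((a * h.2.val : ℕ) : ZMod n)) := by
    have hc1 : (((a : ℕ) : ℤ) • h).1 = ((a : ℕ) : ℤ) • h.1 := by simp
    have hc2 : (((a : ℕ) : ℤ) • h).2 = ((a : ℕ) : ℤ) • h.2 := by simp
    have e1 : ((a : ℕ) : ℤ) • h.1 = (0 : ZMod m) := by
      rw [hh1', natCast_zsmul, nsmul_eq_mul, ← Nat.cast_mul, hadm, ZMod.natCast_self]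
    have e2 : ((a : ℕ) : ℤ) • h.2 = ((a * h.2.val : ℕ) : ZMod n) := by
      conv_lhs => rw [← hval]
      rw [natCast_zsmul, nsmul_eq_mul, ← Nat.cast_mul]
    exact Prod.ext (hc1.trans e1) (hc2.trans e2)
  have hct' : c ∣ a * h.2.val := by
    rw [hcomp] at hmem2'
    have := (hKmem _).mp hmem2'
    rw [ZMod.val_natCast] at this
    exact (Nat.dvd_mod_iff hc).mp this
  have hct : c ∣ a * t := by
    have h1 : a * h.2.val = c * (a * (h.2.val / c)) + a * t := by
      conv_lhs => rw [hsplit]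
      ring
    rw [h1] at hct'
    exact (Nat.dvd_add_right (Dvd.intro _ rfl)).mp hct'
  have hg1H : (((m / a : ℕ) : ZMod m), (t : ZMod n)) ∈ H := by
    have hcq : ((0 : ZMod m), h.2 - (t : ZMod n)) ∈ H := by
      rw [hKmem]
      have h2t : h.2 - (t : ZMod n) = ((c * (h.2.val / c) : ℕ) : ZMod n) := by
        conv_lhs => rw [← hval]
        conv_lhs => rw [hsplit]
        push_cast
        ring
      rw [h2t, ZMod.val_natCast]
      exact (Nat.dvd_mod_iff hc).mpr ⟨_, rfl⟩
    have heq : (((m / a : ℕ) : ZMod m), (t : ZMod n)) = h - ((0 : ZMod m), h.2 - (t : ZMod n)) := by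
      apply Prod.ext
      · simp [hh1', hda]
      · simp
    rw [heq]; exact sub_mem hH hcq
  refine ⟨a, c, t, ha, hc, htc, hct, ?_⟩
  apply le_antisymm
  · rw [F, AddSubgroup.closure_le]
    rintro z (rfl | rfl)
    · exact hg1H
    · rw [SetLike.mem_coe, hKmem, ZMod.val_natCast]
      exact (Nat.dvd_mod_iff hc).mpr dvd_rfl
  · intro z hz
    have hz1 : z.1 ∈ AddSubgroup.closure {(d : ZMod m)} := by
      rw [← hfst]; exact ⟨z, hz, rfl⟩
    obtain ⟨s, hs⟩ := mem_closure_singleton.mp hz1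
    have hg1F : (((m / a : ℕ) : ZMod m), (t : ZMod n)) ∈ F m n a c t :=
      AddSubgroup.subset_closure (Set.mem_insert _ _)
    have hw : z - s • (((m / a : ℕ) : ZMod m), (t : ZMod n)) ∈ H :=
      sub_mem hz (AddSubgroup.zsmul_mem _ hg1H s)
    have hw1 : (z - s • (((m / a : ℕ) : ZMod m), (t : ZMod n))).1 = 0 := by
      have e1 : (z - s • (((m / a : ℕ) : ZMod m), (t : ZMod n))).1
          = z.1 - s • ((d : ℕ) : ZMod m) := by simp [hda]
      rw [e1, hs, sub_self]
    have hw0 : ((0 : ZMod m), (z - s • (((m / a : ℕ) : ZMod m), (t : ZMod n))).2)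
        = z - s • (((m / a : ℕ) : ZMod m), (t : ZMod n)) := Prod.ext hw1.symm rfl
    have hw2 : c ∣ ((z - s • (((m / a : ℕ) : ZMod m), (t : ZMod n))).2).val := by
      rw [← hKmem, hw0]
      exact hw
    obtain ⟨u, hu⟩ := mem_closure_singleton.mp ((mem_closure_cast_iff hc _).mpr hw2)
    have hfin : u • ((0 : ZMod m), (c : ZMod n))
        = z - s • (((m / a : ℕ) : ZMod m), (t : ZMod n)) := by
      rw [← hw0]
      apply Prod.ext
      · simp
      · simpa using hu
    refine (mem_F m n).mpr ⟨s, u, ?_⟩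
    rw [hfin]
    abel

lemma F_inj {a c t a' c' t' : ℕ} (ha : a ∣ m) (hc : c ∣ n) (htc : t < c) (hct : c ∣ a * t)
    (ha' : a' ∣ m) (hc' : c' ∣ n) (htc' : t' < c') (hct' : c' ∣ a' * t')
    (hF : F m n a c t = F m n a' c' t') : a = a' ∧ c = c' ∧ t = t' := by
  have hA : a = a' := by
    have h1 := congrArg (AddSubgroup.map (AddMonoidHom.fst (ZMod m) (ZMod n))) hF
    rw [F_map_fst, F_map_fst] at h1
    have h2 : Nat.card (AddSubgroup.closure {((m / a : ℕ) : ZMod m)} : AddSubgroup (ZMod m))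
        = Nat.card (AddSubgroup.closure {((m / a' : ℕ) : ZMod m)} : AddSubgroup (ZMod m)) := by
      rw [h1]
    rwa [card_closure_cast (Nat.div_dvd_of_dvd ha), card_closure_cast (Nat.div_dvd_of_dvd ha'),
      Nat.div_div_self ha (NeZero.ne m), Nat.div_div_self ha' (NeZero.ne m)] at h2
  subst hA
  have hC : c = c' := by
    have h1 := congrArg (AddSubgroup.comap (AddMonoidHom.inr (ZMod m) (ZMod n))) hF
    rw [F_comap_inr m n ha hc hct, F_comap_inr m n ha hc' hct'] at h1
    have h2 : Nat.card (AddSubgroup.closure {((c : ℕ) : ZMod n)} : AddSubgroup (ZMod n))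
        = Nat.card (AddSubgroup.closure {((c' : ℕ) : ZMod n)} : AddSubgroup (ZMod n)) := by
      rw [h1]
    rw [card_closure_cast hc, card_closure_cast hc'] at h2
    have h3 := congrArg (fun x => n / x) h2
    simpa [Nat.div_div_self hc (NeZero.ne n), Nat.div_div_self hc' (NeZero.ne n)] using h3
  subst hC
  refine ⟨rfl, rfl, ?_⟩
  have hg1 : (((m / a : ℕ) : ZMod m), (t : ZMod n)) ∈ F m n a c t' := by
    rw [← hF]; exact AddSubgroup.subset_closure (Set.mem_insert _ _)
  obtain ⟨s, u, hsu⟩ := (mem_F m n).mp hg1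
  have h1 : s • ((m / a : ℕ) : ZMod m) = ((m / a : ℕ) : ZMod m) := by
    have := congrArg Prod.fst hsu; simpa using this
  have h2 : s • (t' : ZMod n) + u • (c : ZMod n) = (t : ZMod n) := by
    have := congrArg Prod.snd hsu; simpa using this
  have hs1 : ((a : ℕ) : ℤ) ∣ (s - 1) := by
    rw [← addOrderOf_gen m ha, addOrderOf_dvd_iff_zsmul_eq_zero, sub_zsmul, one_zsmul, h1]
    simp
  obtain ⟨v, hv⟩ := hs1
  have hdiff : (t : ZMod n) - (t' : ZMod n) ∈ AddSubgroup.closure {(c : ZMod n)} := by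
    have hs' : s = 1 + ((a : ℕ) : ℤ) * v := by linarith
    have key : s • (t' : ZMod n) = (t' : ZMod n) + v • (((a * t' : ℕ)) : ZMod n) := by
      rw [hs', add_zsmul, one_zsmul, mul_comm ((a : ℕ) : ℤ) v, mul_zsmul, natCast_zsmul,
        nsmul_eq_mul, ← Nat.cast_mul]
    have e1 : (t : ZMod n) - (t' : ZMod n)
        = v • (((a * t' : ℕ)) : ZMod n) + u • (c : ZMod n) := by
      rw [← h2, key]
      abel
    rw [e1]
    have hat' : ((a * t' : ℕ) : ZMod n) ∈ AddSubgroup.closure {(c : ZMod n)} := by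
      rw [mem_closure_cast_iff hc, ZMod.val_natCast]
      exact (Nat.dvd_mod_iff hc).mpr hct'
    have hcc : (c : ZMod n) ∈ AddSubgroup.closure {(c : ZMod n)} :=
      AddSubgroup.subset_closure rfl
    exact add_mem (AddSubgroup.zsmul_mem _ hat' v) (AddSubgroup.zsmul_mem _ hcc u)
  have npos : 0 < n := Nat.pos_of_ne_zero (NeZero.ne n)
  rcases le_total t' t with hle | hle
  · have hcast : ((t - t' : ℕ) : ZMod n) = (t : ZMod n) - (t' : ZMod n) := by
      push_cast [hle]; ring
    have hdvd : c ∣ ((t - t' : ℕ) : ZMod n).val :=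
      (mem_closure_cast_iff hc _).mp (hcast ▸ hdiff)
    have hlt : t - t' < c := lt_of_le_of_lt (Nat.sub_le t t') htc
    have hln : t - t' < n := lt_of_lt_of_le hlt (Nat.le_of_dvd npos hc)
    rw [ZMod.val_natCast, Nat.mod_eq_of_lt hln] at hdvd
    have := Nat.eq_zero_of_dvd_of_lt hdvd hlt
    omega
  · have hdiff' : (t' : ZMod n) - (t : ZMod n) ∈ AddSubgroup.closure {(c : ZMod n)} := by
      have := neg_mem hdiff
      simpa using this
    have hcast : ((t' - t : ℕ) : ZMod n) = (t' : ZMod n) - (t : ZMod n) := by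
      push_cast [hle]; ring
    have hdvd : c ∣ ((t' - t : ℕ) : ZMod n).val :=
      (mem_closure_cast_iff hc _).mp (hcast ▸ hdiff')
    have hlt : t' - t < c := lt_of_le_of_lt (Nat.sub_le t' t) htc'
    have hln : t' - t < n := lt_of_lt_of_le hlt (Nat.le_of_dvd npos hc)
    rw [ZMod.val_natCast, Nat.mod_eq_of_lt hln] at hdvd
    have := Nat.eq_zero_of_dvd_of_lt hdvd hlt
    omega


/-- Solutions `t < c` of `c ∣ a * t`. -/
def T (a c : ℕ) : Finset ℕ := (Finset.range c).filter fun t => c ∣ a * t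

lemma dvd_mul_iff_div_gcd_dvd {a c x : ℕ} (ha : a ≠ 0) :
    c ∣ a * x ↔ (c / Nat.gcd a c) ∣ x := by
  set g := Nat.gcd a c with hgdef
  have hg : 0 < g := Nat.gcd_pos_of_pos_left _ (Nat.pos_of_ne_zero ha)
  have h1 : a = g * (a / g) := (Nat.mul_div_cancel' (Nat.gcd_dvd_left a c)).symm
  have h2 : c = g * (c / g) := (Nat.mul_div_cancel' (Nat.gcd_dvd_right a c)).symm
  constructor
  · intro h
    have h3 : g * (c / g) ∣ g * ((a / g) * x) := by
      rw [← mul_assoc, ← h1, ← h2]; exact h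
    have h4 : (c / g) ∣ (a / g) * x := (Nat.mul_dvd_mul_iff_left hg).mp h3
    exact (Nat.coprime_div_gcd_div_gcd hg).symm.dvd_of_dvd_mul_left h4
  · intro h
    have h4 : (c / g) ∣ (a / g) * x := Dvd.dvd.mul_left h (a / g)
    have h5 : g * (c / g) ∣ g * ((a / g) * x) := mul_dvd_mul_left g h4
    rwa [← mul_assoc, ← h1, ← h2] at h5

lemma card_T {a c : ℕ} (ha : a ≠ 0) (hc : c ≠ 0) : (T a c).card = Nat.gcd a c := by
  have hgc : Nat.gcd a c ∣ c := Nat.gcd_dvd_right a c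
  have hg : 0 < Nat.gcd a c := Nat.gcd_pos_of_pos_left _ (Nat.pos_of_ne_zero ha)
  have hcg : 0 < c / Nat.gcd a c := Nat.div_pos (Nat.le_of_dvd (Nat.pos_of_ne_zero hc) hgc) hg
  have h2 : c = Nat.gcd a c * (c / Nat.gcd a c) := (Nat.mul_div_cancel' hgc).symm
  have hTeq : T a c = (Finset.range (Nat.gcd a c)).image (fun s => s * (c / Nat.gcd a c)) := by
    ext x
    simp only [T, Finset.mem_filter, Finset.mem_range, Finset.mem_image]
    constructor
    · rintro ⟨hx, hdvd⟩
      obtain ⟨s, rfl⟩ := (dvd_mul_iff_div_gcd_dvd ha).mp hdvd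
      refine ⟨s, ?_, mul_comm _ _⟩
      by_contra hcon
      push_neg at hcon
      have hle : Nat.gcd a c * (c / Nat.gcd a c) ≤ s * (c / Nat.gcd a c) :=
        Nat.mul_le_mul_right _ hcon
      rw [← h2] at hle
      rw [mul_comm] at hx
      exact absurd hx (not_lt.mpr hle)
    · rintro ⟨s, hs, rfl⟩
      refine ⟨?_, (dvd_mul_iff_div_gcd_dvd ha).mpr ⟨s, mul_comm _ _⟩⟩
      calc s * (c / Nat.gcd a c) < Nat.gcd a c * (c / Nat.gcd a c) :=
            (Nat.mul_lt_mul_right hcg).mpr hs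
        _ = c := h2.symm
  rw [hTeq, Finset.card_image_of_injective _ fun s1 s2 hss =>
    Nat.eq_of_mul_eq_mul_right hcg hss, Finset.card_range]

theorem card_addSubgroup_prod (m n : ℕ) [NeZero m] [NeZero n] :
    Nat.card (AddSubgroup (ZMod m × ZMod n))
      = ∑ a ∈ m.divisors, ∑ c ∈ n.divisors, Nat.gcd a c := by
  classical
  set D := (m.divisors ×ˢ n.divisors).sigma (fun p => T p.1 p.2) with hD
  have hbij : Function.Bijective (fun x : D => F m n x.1.1.1 x.1.1.2 x.1.2) := by
    constructor
    · rintro ⟨⟨⟨a, c⟩, t⟩, hx⟩ ⟨⟨⟨a', c'⟩, t'⟩, hx'⟩ hFF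
      simp only [hD, Finset.mem_sigma, Finset.mem_product, Nat.mem_divisors, T,
        Finset.mem_filter, Finset.mem_range] at hx hx'
      obtain ⟨⟨⟨ham, -⟩, hcn, -⟩, htlt, hdvd⟩ := hx
      obtain ⟨⟨⟨ham', -⟩, hcn', -⟩, htlt', hdvd'⟩ := hx'
      dsimp only at hFF
      obtain ⟨rfl, rfl, rfl⟩ := F_inj m n ham hcn htlt hdvd ham' hcn' htlt' hdvd' hFF
      rfl
    · intro H
      obtain ⟨a, c, t, ha, hc, htc, hct, hFH⟩ := F_surj m n H
      refine ⟨⟨⟨⟨a, c⟩, t⟩, ?_⟩, hFH⟩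
      simp only [hD, Finset.mem_sigma, Finset.mem_product, Nat.mem_divisors, T,
        Finset.mem_filter, Finset.mem_range]
      exact ⟨⟨⟨ha, NeZero.ne m⟩, hc, NeZero.ne n⟩, htc, hct⟩
  have hcard := Nat.card_congr (Equiv.ofBijective _ hbij)
  rw [← hcard, Nat.card_eq_fintype_card, Fintype.card_coe, hD, Finset.card_sigma]
  rw [Finset.sum_product]
  refine Finset.sum_congr rfl fun a hA => Finset.sum_congr rfl fun c hC => ?_
  exact card_T (Nat.pos_of_mem_divisors hA).ne' (Nat.pos_of_mem_divisors hC).ne'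

end AuxCount

namespace AuxArith

lemma gcd_split {a₁ c₁ a₂ c₂ : ℕ} (h12 : Nat.Coprime a₁ c₂) (h21 : Nat.Coprime a₂ c₁)
    (hc : Nat.Coprime c₁ c₂) :
    Nat.gcd (a₁ * a₂) (c₁ * c₂) = Nat.gcd a₁ c₁ * Nat.gcd a₂ c₂ := by
  have hx : Nat.gcd (Nat.gcd (a₁ * a₂) (c₁ * c₂)) c₁ * Nat.gcd (Nat.gcd (a₁ * a₂) (c₁ * c₂)) c₂
      = Nat.gcd (a₁ * a₂) (c₁ * c₂) :=
    (Nat.gcd_mul_gcd_eq_iff_dvd_mul_of_coprime hc).mpr (Nat.gcd_dvd_right _ _)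
  have e1 : Nat.gcd (Nat.gcd (a₁ * a₂) (c₁ * c₂)) c₁ = Nat.gcd a₁ c₁ := by
    rw [Nat.gcd_assoc, Nat.gcd_eq_right (dvd_mul_right c₁ c₂)]
    exact Nat.Coprime.gcd_mul_right_cancel a₁ h21
  have e2 : Nat.gcd (Nat.gcd (a₁ * a₂) (c₁ * c₂)) c₂ = Nat.gcd a₂ c₂ := by
    rw [Nat.gcd_assoc, Nat.gcd_eq_right (dvd_mul_left c₂ c₁)]
    exact Nat.Coprime.gcd_mul_left_cancel a₂ h12
  rw [← hx, e1, e2]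

lemma sum_divisors_mul {m n : ℕ} (hm : m ≠ 0) (hn : n ≠ 0) (h : Nat.Coprime m n) (f : ℕ → ℕ) :
    ∑ d ∈ (m * n).divisors, f d = ∑ a ∈ m.divisors, ∑ b ∈ n.divisors, f (a * b) := by
  rw [← Finset.sum_product']
  refine Finset.sum_nbij' (fun d => (Nat.gcd d m, Nat.gcd d n)) (fun p => p.1 * p.2)
    ?_ ?_ ?_ ?_ ?_
  · intro d hd
    obtain ⟨hdvd, -⟩ := Nat.mem_divisors.mp hd
    exact Finset.mem_product.mpr ⟨Nat.mem_divisors.mpr ⟨Nat.gcd_dvd_right _ _, hm⟩,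
      Nat.mem_divisors.mpr ⟨Nat.gcd_dvd_right _ _, hn⟩⟩
  · intro p hp
    obtain ⟨hp1, hp2⟩ := Finset.mem_product.mp hp
    exact Nat.mem_divisors.mpr ⟨mul_dvd_mul (Nat.mem_divisors.mp hp1).1 (Nat.mem_divisors.mp hp2).1,
      mul_ne_zero hm hn⟩
  · intro d hd
    exact (Nat.gcd_mul_gcd_eq_iff_dvd_mul_of_coprime h).mpr (Nat.mem_divisors.mp hd).1
  · intro p hp
    obtain ⟨hp1, hp2⟩ := Finset.mem_product.mp hp
    have ha := (Nat.mem_divisors.mp hp1).1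
    have hb := (Nat.mem_divisors.mp hp2).1
    have hbm : Nat.Coprime p.2 m := Nat.Coprime.coprime_dvd_left hb h.symm
    have han : Nat.Coprime p.1 n := Nat.Coprime.coprime_dvd_left ha h
    have e1 : Nat.gcd (p.1 * p.2) m = p.1 := by
      rw [Nat.Coprime.gcd_mul_right_cancel p.1 hbm]
      exact Nat.gcd_eq_left ha
    have e2 : Nat.gcd (p.1 * p.2) n = p.2 := by
      rw [Nat.Coprime.gcd_mul_left_cancel p.2 han]
      exact Nat.gcd_eq_left hb
    show ((p.1 * p.2).gcd m, (p.1 * p.2).gcd n) = p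
    rw [e1, e2]
  · intro d hd
    show f d = f (Nat.gcd d m * Nat.gcd d n)
    rw [(Nat.gcd_mul_gcd_eq_iff_dvd_mul_of_coprime h).mpr (Nat.mem_divisors.mp hd).1]

lemma gcd_pow_pow (a x y : ℕ) : Nat.gcd (a ^ x) (a ^ y) = a ^ min x y := by
  rcases le_total x y with h | h
  · rw [min_eq_left h]; exact Nat.gcd_eq_left (pow_dvd_pow a h)
  · rw [min_eq_right h]; exact Nat.gcd_eq_right (pow_dvd_pow a h)

lemma sum_ite_le {N j : ℕ} (hj : j ≤ N) (C : ℕ) :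
    ∑ x ∈ Finset.range (N + 1), (if j ≤ x then C else 0) = (N - j + 1) * C := by
  rw [← Finset.sum_filter]
  have hf : (Finset.range (N + 1)).filter (fun x => j ≤ x) = Finset.Ico j (N + 1) := by
    ext x
    simp only [Finset.mem_filter, Finset.mem_range, Finset.mem_Ico]
    omega
  rw [hf, Finset.sum_const, Nat.card_Ico, smul_eq_mul]
  congr 1
  omega

lemma totient_pow_sum {r : ℕ} (hr : r.Prime) (M : ℕ) :
    ∑ j ∈ Finset.range (M + 1), Nat.totient (r ^ j) = r ^ M := by
  have h := Nat.sum_totient (r ^ M)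
  rwa [Nat.sum_divisors_prime_pow hr] at h

lemma prime_pow_double (r k l : ℕ) (hr : r.Prime) :
    ∑ x ∈ Finset.range (k + 1), ∑ y ∈ Finset.range (l + 1), r ^ min x y
      = ∑ j ∈ Finset.range (min k l + 1),
          Nat.totient (r ^ j) * (k - j + 1) * (l - j + 1) := by
  have step1 : ∀ x ∈ Finset.range (k + 1), ∀ y ∈ Finset.range (l + 1),
      r ^ min x y = ∑ j ∈ Finset.range (min k l + 1),
        (if j ≤ x ∧ j ≤ y then Nat.totient (r ^ j) else 0) := by
    intro x hx y hy
    simp only [Finset.mem_range] at hx hy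
    rw [← Finset.sum_filter]
    have hfil : (Finset.range (min k l + 1)).filter (fun j => j ≤ x ∧ j ≤ y)
        = Finset.range (min x y + 1) := by
      ext j
      simp only [Finset.mem_filter, Finset.mem_range]
      omega
    rw [hfil, totient_pow_sum hr]
  rw [Finset.sum_congr rfl (fun x hx => Finset.sum_congr rfl (fun y hy => step1 x hx y hy))]
  rw [Finset.sum_congr rfl (fun x _ => Finset.sum_comm)]
  rw [Finset.sum_comm]
  refine Finset.sum_congr rfl fun j hj => ?_
  have hjk : j ≤ k := by
    have := Finset.mem_range.mp hj; omega
  have hjl : j ≤ l := by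
    have := Finset.mem_range.mp hj; omega
  have e1 : ∀ x, ∑ y ∈ Finset.range (l + 1), (if j ≤ x ∧ j ≤ y then Nat.totient (r ^ j) else 0)
      = (if j ≤ x then (l - j + 1) * Nat.totient (r ^ j) else 0) := by
    intro x
    by_cases hjx : j ≤ x
    · simp only [hjx, true_and, if_true]
      exact sum_ite_le hjl (Nat.totient (r ^ j))
    · simp [hjx]
  rw [Finset.sum_congr rfl fun x _ => e1 x, sum_ite_le hjk ((l - j + 1) * Nat.totient (r ^ j))]
  ring

lemma main_arith {ι : Type*} [DecidableEq ι] (r k l : ι → ℕ) (s : Finset ι)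
    (hr : ∀ i ∈ s, (r i).Prime)
    (hinj : ∀ i ∈ s, ∀ j ∈ s, r i = r j → i = j) :
    ∑ a ∈ (∏ i ∈ s, r i ^ k i).divisors, ∑ c ∈ (∏ i ∈ s, r i ^ l i).divisors, Nat.gcd a c
      = ∏ i ∈ s, ∑ j ∈ Finset.range (min (k i) (l i) + 1),
          Nat.totient (r i ^ j) * (k i - j + 1) * (l i - j + 1) := by
  induction s using Finset.induction_on with
  | empty => simp
  | @insert i s hi ih =>
    have hri : (r i).Prime := hr i (Finset.mem_insert_self i s)
    have hr' : ∀ j ∈ s, (r j).Prime := fun j hj => hr j (Finset.mem_insert_of_mem hj)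
    have hinj' : ∀ a ∈ s, ∀ b ∈ s, r a = r b → a = b := fun a ha b hb hab =>
      hinj a (Finset.mem_insert_of_mem ha) b (Finset.mem_insert_of_mem hb) hab
    have hPne : (∏ j ∈ s, r j ^ k j) ≠ 0 :=
      Finset.prod_ne_zero_iff.mpr fun j hj => pow_ne_zero _ (hr' j hj).pos.ne'
    have hQne : (∏ j ∈ s, r j ^ l j) ≠ 0 :=
      Finset.prod_ne_zero_iff.mpr fun j hj => pow_ne_zero _ (hr' j hj).pos.ne'
    have hcopi : ∀ (e : ℕ) (w : ι → ℕ), Nat.Coprime (r i ^ e) (∏ j ∈ s, r j ^ w j) := by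
      intro e w
      apply Nat.Coprime.pow_left
      apply Nat.Coprime.prod_right
      intro j hj
      apply Nat.Coprime.pow_right
      rw [Nat.coprime_primes hri (hr' j hj)]
      intro he
      exact hi ((hinj i (Finset.mem_insert_self i s) j (Finset.mem_insert_of_mem hj) he) ▸ hj)
    have e0 : ∀ a₁ ∈ (r i ^ k i).divisors, ∀ a₂ ∈ (∏ j ∈ s, r j ^ k j).divisors,
        ∑ c ∈ (r i ^ l i * ∏ j ∈ s, r j ^ l j).divisors, Nat.gcd (a₁ * a₂) c
          = (∑ c₁ ∈ (r i ^ l i).divisors, Nat.gcd a₁ c₁)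
              * (∑ c₂ ∈ (∏ j ∈ s, r j ^ l j).divisors, Nat.gcd a₂ c₂) := by
      intro a₁ ha₁ a₂ ha₂
      have hda₁ := (Nat.mem_divisors.mp ha₁).1
      have hda₂ := (Nat.mem_divisors.mp ha₂).1
      rw [sum_divisors_mul (pow_ne_zero _ hri.pos.ne') hQne (hcopi (l i) l)]
      rw [Finset.sum_mul_sum]
      refine Finset.sum_congr rfl fun c₁ hc₁ => Finset.sum_congr rfl fun c₂ hc₂ => ?_
      have hdc₁ := (Nat.mem_divisors.mp hc₁).1
      have hdc₂ := (Nat.mem_divisors.mp hc₂).1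
      refine gcd_split ?_ ?_ ?_
      · exact Nat.Coprime.coprime_dvd_right hdc₂ (Nat.Coprime.coprime_dvd_left hda₁ (hcopi (k i) l))
      · exact Nat.Coprime.coprime_dvd_right hdc₁
          (Nat.Coprime.coprime_dvd_left hda₂ ((hcopi (l i) k).symm))
      · exact Nat.Coprime.coprime_dvd_right hdc₂ (Nat.Coprime.coprime_dvd_left hdc₁ (hcopi (l i) l))
    rw [Finset.prod_insert hi, Finset.prod_insert hi, Finset.prod_insert hi]
    rw [sum_divisors_mul (pow_ne_zero _ hri.pos.ne') hPne (hcopi (k i) k)]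
    rw [Finset.sum_congr rfl fun a₁ ha₁ => Finset.sum_congr rfl fun a₂ ha₂ => e0 a₁ ha₁ a₂ ha₂]
    rw [← Finset.sum_mul_sum]
    rw [ih hr' hinj']
    congr 1
    rw [Nat.sum_divisors_prime_pow hri]
    rw [Finset.sum_congr rfl fun x _ => Nat.sum_divisors_prime_pow hri]
    rw [Finset.sum_congr rfl fun x _ => Finset.sum_congr rfl fun y _ => gcd_pow_pow (r i) x y]
    exact prime_pow_double (r i) (k i) (l i) hri

end AuxArith

open scoped BigOperators

/-- If `p` and `q` are distinct primes with `p − 1 = ∏ rᵢ^kᵢ` and `q − 1 = ∏ rᵢ^ℓᵢ`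
for distinct primes `rᵢ`, then the number of subgroups of `Z_{p−1} × Z_{q−1}`
(isomorphic to `Aut(Z_{pq})`) is `∏ᵢ ∑_{j=0}^{min(kᵢ,ℓᵢ)} φ(rᵢ^j)(kᵢ−j+1)(ℓᵢ−j+1)`. -/
theorem card_subgroups_aut_semiprime (p q : ℕ) (hp : p.Prime) (hq : q.Prime) (hpq : p ≠ q)
    (n : ℕ) (r k l : Fin n → ℕ) (hr : ∀ i, (r i).Prime) (hrdist : Function.Injective r)
    (hpfact : p - 1 = ∏ i, r i ^ k i) (hqfact : q - 1 = ∏ i, r i ^ l i) :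
    Nat.card (AddSubgroup (ZMod (p - 1) × ZMod (q - 1))) =
      ∏ i, ∑ j ∈ Finset.range (min (k i) (l i) + 1),
        Nat.totient (r i ^ j) * (k i - j + 1) * (l i - j + 1) := by
  haveI h1 : NeZero (p - 1) := ⟨by have := hp.two_le; omega⟩
  haveI h2 : NeZero (q - 1) := ⟨by have := hq.two_le; omega⟩
  rw [AuxCount.card_addSubgroup_prod (p - 1) (q - 1), hpfact, hqfact]
  exact AuxArith.main_arith r k l Finset.univ (fun i _ => hr i) (fun i _ j _ hij => hrdist hij)
end

section
/- Let p be an odd prime with p − 1 = 2^k·a where a is odd and k ≥ 1, and let x be the number of positive divisors of p−1. Then the number of subgroups of the abelian group Z_2 × Z_{p−1} equals (3k+2)·x/(k+1); equivalently, it equals (3k+2) times the number of positive divisors of a. -/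
open scoped BigOperators


open AddSubgroup

variable {n : ℕ} [NeZero n]

/-- The subgroup of `ZMod n` of elements whose `val` is divisible by `d`, for `d ∣ n`. -/
def Kd (d : ℕ) (hd : d ∣ n) : AddSubgroup (ZMod n) :=
  (ZMod.castHom hd (ZMod d)).toAddMonoidHom.ker

lemma neZero_of_dvd {d : ℕ} (hd : d ∣ n) : NeZero d := by
  constructor
  rintro rfl
  exact (NeZero.ne n) (zero_dvd_iff.mp hd)

lemma mem_Kd {d : ℕ} (hd : d ∣ n) {x : ZMod n} : x ∈ Kd d hd ↔ d ∣ x.val := by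
  haveI := neZero_of_dvd hd
  rw [Kd, AddMonoidHom.mem_ker]
  show (ZMod.castHom hd (ZMod d)) x = 0 ↔ _
  rw [ZMod.castHom_apply, ← ZMod.natCast_val, ZMod.natCast_eq_zero_iff]

lemma Kd_inj {d d' : ℕ} (hd : d ∣ n) (hd' : d' ∣ n)
    (h : Kd d hd = Kd d' hd') : d = d' := by
  have key : ∀ (e e' : ℕ) (he : e ∣ n) (he' : e' ∣ n), Kd e he = Kd e' he' → e ∣ e' := by
    intro e e' he he' hK
    have h1 : ((e' : ZMod n)) ∈ Kd e' he' := by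
      rw [mem_Kd, ZMod.val_natCast]
      exact (Nat.dvd_mod_iff he').mpr dvd_rfl
    rw [← hK, mem_Kd, ZMod.val_natCast, Nat.dvd_mod_iff he] at h1
    exact h1
  exact Nat.dvd_antisymm (key d d' hd hd' h) (key d' d hd' hd h.symm)

lemma zmultiples_natCast (c : ℕ) :
    zmultiples ((c : ZMod n)) = Kd (Nat.gcd n c) (Nat.gcd_dvd_left n c) := by
  apply le_antisymm
  · rw [zmultiples_le, mem_Kd, ZMod.val_natCast]
    exact (Nat.dvd_mod_iff (Nat.gcd_dvd_left n c)).mpr (Nat.gcd_dvd_right n c)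
  · intro x hx
    rw [mem_Kd] at hx
    have hg : ((Nat.gcd n c : ℕ) : ZMod n) ∈ zmultiples ((c : ZMod n)) := by
      rw [mem_zmultiples_iff]
      refine ⟨Nat.gcdB n c, ?_⟩
      have := Nat.gcd_eq_gcd_ab n c
      calc (Nat.gcdB n c) • ((c : ℕ) : ZMod n) = ((Nat.gcdB n c : ℤ) : ZMod n) * ((c:ℤ) : ZMod n) := by
            push_cast [zsmul_eq_mul]; ring
        _ = (((n : ℤ) * Nat.gcdA n c + (c : ℤ) * Nat.gcdB n c : ℤ) : ZMod n) := by
            push_cast [ZMod.natCast_self]; ring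
        _ = (((Nat.gcd n c : ℤ)) : ZMod n) := by rw [← this]
        _ = ((Nat.gcd n c : ℕ) : ZMod n) := by push_cast; rfl
    have hx2 : (x.val / Nat.gcd n c) • ((Nat.gcd n c : ℕ) : ZMod n) = x := by
      rw [nsmul_eq_mul]
      calc (↑(x.val / Nat.gcd n c) : ZMod n) * ((Nat.gcd n c : ℕ) : ZMod n)
          = ((x.val / Nat.gcd n c * Nat.gcd n c : ℕ) : ZMod n) := by push_cast; ring
        _ = ((x.val : ℕ) : ZMod n) := by rw [Nat.div_mul_cancel hx]
        _ = x := ZMod.natCast_rightInverse x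
    rw [← hx2]
    exact AddSubgroup.nsmul_mem _ hg _

lemma exists_Kd (K : AddSubgroup (ZMod n)) : ∃ d, ∃ hd : d ∣ n, K = Kd d hd := by
  obtain ⟨g, hg⟩ := Int.subgroup_cyclic (K.comap (Int.castAddHom (ZMod n)))
  have hK : K = AddSubgroup.map (Int.castAddHom (ZMod n)) (AddSubgroup.closure {g}) := by
    rw [← hg, AddSubgroup.map_comap_eq_self_of_surjective ZMod.intCast_surjective]
  rw [AddMonoidHom.map_closure, Set.image_singleton] at hK
  have himg : (Int.castAddHom (ZMod n)) g = ((g.natAbs : ℕ) : ZMod n) ∨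
      (Int.castAddHom (ZMod n)) g = -((g.natAbs : ℕ) : ZMod n) := by
    rcases Int.natAbs_eq g with h | h
    · left; rw [Int.coe_castAddHom]; conv_lhs => rw [h]
      exact Int.cast_natCast _
    · right; rw [Int.coe_castAddHom]; conv_lhs => rw [h]
      show ((-(g.natAbs : ℤ) : ℤ) : ZMod n) = -((g.natAbs : ℕ) : ZMod n)
      push_cast; rw [Int.abs_eq_natAbs, Int.cast_natCast]
  have hzm : AddSubgroup.closure {(Int.castAddHom (ZMod n)) g}
      = zmultiples ((g.natAbs : ℕ) : ZMod n) := by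
    rcases himg with h | h <;> rw [h, ← AddSubgroup.zmultiples_eq_closure]
    ext y
    simp only [mem_zmultiples_iff]
    constructor <;> rintro ⟨k, rfl⟩ <;> exact ⟨-k, by simp⟩
  refine ⟨Nat.gcd n g.natAbs, Nat.gcd_dvd_left _ _, ?_⟩
  rw [hK, hzm, zmultiples_natCast]

/-! ### Three families of subgroups of `ZMod 2 × ZMod n` -/

def SA (d : ℕ) (hd : d ∣ n) : AddSubgroup (ZMod 2 × ZMod n) :=
  (⊥ : AddSubgroup (ZMod 2)).prod (Kd d hd)

def SB (d : ℕ) (hd : d ∣ n) : AddSubgroup (ZMod 2 × ZMod n) :=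
  (⊤ : AddSubgroup (ZMod 2)).prod (Kd d hd)

lemma modeqd {d : ℕ} (e e' : ZMod 2) :
    d * (e + e').val ≡ d * e.val + d * e'.val [MOD 2 * d] := by
  have h := (Nat.mod_modEq (e.val + e'.val) 2).mul_left' d
  rw [ZMod.val_add, mul_add] at *
  exact mul_comm d 2 ▸ h

lemma modeq2 {d : ℕ} (hd : d ∣ n) (s s' : ZMod n) :
    2 * (s + s').val ≡ 2 * s.val + 2 * s'.val [MOD 2 * d] := by
  have h := (Nat.mod_modEq (s.val + s'.val) n).mul_left' 2
  rw [ZMod.val_add, mul_add] at *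
  exact h.of_dvd (mul_dvd_mul_left 2 hd)

def SCcond (d : ℕ) (z : ZMod 2 × ZMod n) : Prop := 2 * d ∣ d * z.1.val + 2 * z.2.val

lemma SCcond_addeq {d : ℕ} (hd : d ∣ n) (z w : ZMod 2 × ZMod n) :
    d * (z + w).1.val + 2 * (z + w).2.val
      ≡ (d * z.1.val + 2 * z.2.val) + (d * w.1.val + 2 * w.2.val) [MOD 2 * d] := by
  have h := (modeqd (d := d) z.1 w.1).add (modeq2 hd z.2 w.2)
  calc d * (z + w).1.val + 2 * (z + w).2.val
      = d * (z.1 + w.1).val + 2 * (z.2 + w.2).val := rfl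
    _ ≡ (d * z.1.val + d * w.1.val) + (2 * z.2.val + 2 * w.2.val) [MOD 2 * d] := h
    _ = (d * z.1.val + 2 * z.2.val) + (d * w.1.val + 2 * w.2.val) := by ring

def SC (d : ℕ) (hd : d ∣ n) : AddSubgroup (ZMod 2 × ZMod n) where
  carrier := {z | SCcond d z}
  zero_mem' := by
    show 2 * d ∣ d * (0 : ZMod 2).val + 2 * (0 : ZMod n).val
    simp [ZMod.val_zero]
  add_mem' := by
    intro z w hz hw
    show SCcond d (z + w)
    have hz' : d * z.1.val + 2 * z.2.val ≡ 0 [MOD 2 * d] := Nat.modEq_zero_iff_dvd.mpr hz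
    have hw' : d * w.1.val + 2 * w.2.val ≡ 0 [MOD 2 * d] := Nat.modEq_zero_iff_dvd.mpr hw
    exact Nat.modEq_zero_iff_dvd.mp ((SCcond_addeq hd z w).trans (by simpa using hz'.add hw'))
  neg_mem' := by
    intro z hz
    show SCcond d (-z)
    have h := SCcond_addeq hd z (-z)
    rw [add_neg_cancel] at h
    simp only [Prod.fst_zero, Prod.snd_zero, ZMod.val_zero, mul_zero, add_zero] at h
    have hz' : d * z.1.val + 2 * z.2.val ≡ 0 [MOD 2 * d] := Nat.modEq_zero_iff_dvd.mpr hz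
    refine Nat.modEq_zero_iff_dvd.mp ?_
    calc d * (-z).1.val + 2 * (-z).2.val
        ≡ 0 + (d * (-z).1.val + 2 * (-z).2.val) [MOD 2*d] := by rw [zero_add]
      _ ≡ (d * z.1.val + 2 * z.2.val) + (d * (-z).1.val + 2 * (-z).2.val) [MOD 2*d] :=
          (hz'.symm.add_right _)
      _ ≡ 0 [MOD 2*d] := h.symm

lemma mem_SA {d : ℕ} (hd : d ∣ n) {z : ZMod 2 × ZMod n} :
    z ∈ SA d hd ↔ z.1 = 0 ∧ d ∣ z.2.val := by
  rw [SA, AddSubgroup.mem_prod, AddSubgroup.mem_bot, mem_Kd]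

lemma mem_SB {d : ℕ} (hd : d ∣ n) {z : ZMod 2 × ZMod n} :
    z ∈ SB d hd ↔ d ∣ z.2.val := by
  rw [SB, AddSubgroup.mem_prod, mem_Kd]
  simp

lemma mem_SC {d : ℕ} (hd : d ∣ n) {z : ZMod 2 × ZMod n} :
    z ∈ SC d hd ↔ 2 * d ∣ d * z.1.val + 2 * z.2.val := Iff.rfl

lemma mem_SC_zero {d : ℕ} (hd : d ∣ n) (x : ZMod n) :
    ((0 : ZMod 2), x) ∈ SC d hd ↔ d ∣ x.val := by
  rw [mem_SC]
  show 2 * d ∣ d * (0 : ZMod 2).val + 2 * x.val ↔ _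
  rw [ZMod.val_zero, mul_zero, zero_add]
  exact mul_dvd_mul_iff_left (two_ne_zero)

lemma dvd_val_inj {d d' : ℕ} (hd : d ∣ n) (hd' : d' ∣ n)
    (h : ∀ x : ZMod n, d ∣ x.val ↔ d' ∣ x.val) : d = d' :=
  Kd_inj hd hd' (by ext x; rw [mem_Kd, mem_Kd]; exact h x)

lemma val_add_modeq {d : ℕ} (hd : d ∣ n) (x y : ZMod n) :
    (x + y).val ≡ x.val + y.val [MOD d] := by
  rw [ZMod.val_add]
  exact (Nat.mod_modEq _ n).of_dvd hd

lemma sub_val_modeq {d : ℕ} (hd : d ∣ n) (x y : ZMod n) :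
    (x - y).val + y.val ≡ x.val [MOD d] := by
  have h := val_add_modeq hd (x - y) y
  rw [sub_add_cancel] at h
  exact h.symm

lemma zmod2_cases (e : ZMod 2) : e = 0 ∨ e = 1 := by
  revert e; decide

lemma exists_family (H : AddSubgroup (ZMod 2 × ZMod n)) :
    (∃ d, ∃ hd : d ∣ n, H = SA d hd) ∨ (∃ d, ∃ hd : d ∣ n, H = SB d hd) ∨
      (∃ d, ∃ hd : d ∣ n, 2 ∣ d ∧ H = SC d hd) := by
  obtain ⟨d, hd, hK⟩ := exists_Kd (H.comap (AddMonoidHom.inr (ZMod 2) (ZMod n)))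
  have hmemK : ∀ x : ZMod n, (((0 : ZMod 2), x) ∈ H ↔ d ∣ x.val) := by
    intro x
    have h1 : (((0 : ZMod 2), x) ∈ H) ↔ x ∈ H.comap (AddMonoidHom.inr (ZMod 2) (ZMod n)) :=
      Iff.rfl
    rw [h1, hK, mem_Kd]
  by_cases hsur : ∃ s : ZMod n, ((1 : ZMod 2), s) ∈ H
  · obtain ⟨s, hs⟩ := hsur
    have h2s : d ∣ 2 * s.val := by
      have hmem : ((0 : ZMod 2), s + s) ∈ H := by
        have h := H.add_mem hs hs
        rwa [show ((1:ZMod 2), s) + ((1:ZMod 2), s) = ((0:ZMod 2), s + s) from by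
          rw [Prod.mk_add_mk]; norm_num; decide] at h
      have hd2 := (hmemK _).1 hmem
      rw [ZMod.val_add, Nat.dvd_mod_iff hd] at hd2
      rwa [two_mul]
    by_cases hds : d ∣ s.val
    · right; left
      refine ⟨d, hd, ?_⟩
      have h10 : ((1:ZMod 2), (0:ZMod n)) ∈ H := by
        have h := H.sub_mem hs ((hmemK s).2 hds)
        rwa [show ((1:ZMod 2), s) - ((0:ZMod 2), s) = ((1:ZMod 2), (0:ZMod n)) from by
          rw [Prod.mk_sub_mk, sub_zero, sub_self]] at h
      ext z
      obtain ⟨e, s'⟩ := z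
      rw [mem_SB hd]
      constructor
      · intro hz
        rcases zmod2_cases e with rfl | rfl
        · exact (hmemK s').1 hz
        · have h := H.sub_mem hz h10
          rw [show ((1:ZMod 2), s') - ((1:ZMod 2), (0:ZMod n)) = ((0:ZMod 2), s') from by
            rw [Prod.mk_sub_mk, sub_self, sub_zero]] at h
          exact (hmemK s').1 h
      · intro hs'
        have h0 : ((0:ZMod 2), s') ∈ H := (hmemK s').2 hs'
        rcases zmod2_cases e with rfl | rfl
        · exact h0
        · have h := H.add_mem h10 h0
          rwa [show ((1:ZMod 2), (0:ZMod n)) + ((0:ZMod 2), s') = ((1:ZMod 2), s') from by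
            rw [Prod.mk_add_mk, add_zero, zero_add]] at h
    · right; right
      have h2d : 2 ∣ d := by
        by_contra h2d
        apply hds
        have hco : Nat.Coprime d 2 :=
          Nat.Coprime.symm ((Nat.prime_two.coprime_iff_not_dvd).mpr h2d)
        exact hco.dvd_of_dvd_mul_left h2s
      have hkey : 2 * d ∣ d + 2 * s.val := by
        obtain ⟨m, hm⟩ := h2s
        obtain ⟨d2, hd2⟩ := h2d
        have hmo : ¬ 2 ∣ m := by
          rintro ⟨j, hj⟩
          have h5 : 2 * s.val = 2 * (d * j) := by rw [hm, hj]; ring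
          exact hds ⟨j, by omega⟩
        obtain ⟨j, hj⟩ : ∃ j, m = 2 * j + 1 := ⟨m / 2, by omega⟩
        refine ⟨j + 1, ?_⟩
        calc d + 2 * s.val = d + d * m := by rw [hm]
          _ = d + d * (2 * j + 1) := by rw [hj]
          _ = 2 * d * (j + 1) := by ring
      refine ⟨d, hd, h2d, ?_⟩
      ext z
      obtain ⟨e, s'⟩ := z
      rw [mem_SC hd]
      rcases zmod2_cases e with rfl | rfl
      · rw [hmemK s']
        show d ∣ s'.val ↔ 2 * d ∣ d * (0 : ZMod 2).val + 2 * s'.val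
        rw [show (0 : ZMod 2).val = 0 from rfl, mul_zero, zero_add]
        exact (mul_dvd_mul_iff_left (two_ne_zero)).symm
      · show ((1:ZMod 2), s') ∈ H ↔ 2 * d ∣ d * (1 : ZMod 2).val + 2 * s'.val
        rw [show (1 : ZMod 2).val = 1 from rfl, mul_one]
        constructor
        · intro hz
          have hsub : ((0:ZMod 2), s' - s) ∈ H := by
            have h := H.sub_mem hz hs
            rwa [show ((1:ZMod 2), s') - ((1:ZMod 2), s) = ((0:ZMod 2), s' - s) from by
              rw [Prod.mk_sub_mk, sub_self]] at h
          have hdvd := (hmemK _).1 hsub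
          have hval : s'.val ≡ s.val [MOD d] := by
            calc s'.val ≡ (s' - s).val + s.val [MOD d] := (sub_val_modeq hd s' s).symm
              _ ≡ 0 + s.val [MOD d] :=
                  Nat.ModEq.add_right _ (Nat.modEq_zero_iff_dvd.mpr hdvd)
              _ = s.val := zero_add _
          have hmod : d + 2 * s'.val ≡ d + 2 * s.val [MOD 2 * d] :=
            Nat.ModEq.add_left d (hval.mul_left' 2)
          exact Nat.modEq_zero_iff_dvd.mp
            (hmod.trans (Nat.modEq_zero_iff_dvd.mpr hkey))
        · intro hz
          have h1 : d + 2 * s'.val ≡ d + 2 * s.val [MOD 2 * d] :=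
            (Nat.modEq_zero_iff_dvd.mpr hz).trans (Nat.modEq_zero_iff_dvd.mpr hkey).symm
          have h2 : 2 * s'.val ≡ 2 * s.val [MOD 2 * d] := h1.add_left_cancel' d
          have h3 : s'.val ≡ s.val [MOD d] := by
            have h2' := h2
            unfold Nat.ModEq at h2' ⊢
            rw [Nat.mul_mod_mul_left, Nat.mul_mod_mul_left] at h2'
            omega
          have hdvd : d ∣ (s' - s).val := by
            have h4 : (s' - s).val + s.val ≡ 0 + s.val [MOD d] := by
              rw [zero_add]
              exact (sub_val_modeq hd s' s).trans h3
            exact Nat.modEq_zero_iff_dvd.mp (h4.add_right_cancel' s.val)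
          have h0 : ((0:ZMod 2), s' - s) ∈ H := (hmemK _).2 hdvd
          have h := H.add_mem hs h0
          rwa [show ((1:ZMod 2), s) + ((0:ZMod 2), s' - s) = ((1:ZMod 2), s') from by
            rw [Prod.mk_add_mk, add_zero, add_sub_cancel]] at h
  · left
    refine ⟨d, hd, ?_⟩
    ext z
    obtain ⟨e, s⟩ := z
    rw [mem_SA hd]
    constructor
    · intro hz
      rcases zmod2_cases e with rfl | rfl
      · exact ⟨rfl, (hmemK s).1 hz⟩
      · exact absurd ⟨s, hz⟩ hsur
    · rintro ⟨he, hsv⟩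
      have he' : e = 0 := he
      subst he'
      exact (hmemK s).2 hsv

lemma SA_inj {d d' : ℕ} (hd : d ∣ n) (hd' : d' ∣ n) (h : SA d hd = SA d' hd') : d = d' := by
  refine dvd_val_inj hd hd' fun x => ?_
  constructor
  · intro hx
    have h1 : ((0 : ZMod 2), x) ∈ SA d hd := (mem_SA hd).2 ⟨rfl, hx⟩
    rw [h] at h1
    exact ((mem_SA hd').1 h1).2
  · intro hx
    have h1 : ((0 : ZMod 2), x) ∈ SA d' hd' := (mem_SA hd').2 ⟨rfl, hx⟩
    rw [← h] at h1
    exact ((mem_SA hd).1 h1).2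

lemma SB_inj {d d' : ℕ} (hd : d ∣ n) (hd' : d' ∣ n) (h : SB d hd = SB d' hd') : d = d' := by
  refine dvd_val_inj hd hd' fun x => ?_
  rw [← mem_SB hd (z := ((0 : ZMod 2), x)), h, mem_SB hd']

lemma SC_inj {d d' : ℕ} (hd : d ∣ n) (hd' : d' ∣ n) (h : SC d hd = SC d' hd') : d = d' := by
  refine dvd_val_inj hd hd' fun x => ?_
  rw [← mem_SC_zero hd x, h, mem_SC_zero hd' x]

lemma one_zero_mem_SB {d : ℕ} (hd : d ∣ n) : ((1 : ZMod 2), (0 : ZMod n)) ∈ SB d hd :=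
  (mem_SB hd).2 (by rw [ZMod.val_zero]; exact dvd_zero d)

lemma one_zero_not_mem_SA {d : ℕ} (hd : d ∣ n) : ((1 : ZMod 2), (0 : ZMod n)) ∉ SA d hd := by
  intro h
  have h1 : (1 : ZMod 2) = 0 := ((mem_SA hd).1 h).1
  exact absurd h1 (by decide)

lemma one_zero_not_mem_SC {d : ℕ} (hd : d ∣ n) (hd0 : d ≠ 0) :
    ((1 : ZMod 2), (0 : ZMod n)) ∉ SC d hd := by
  rw [mem_SC]
  show ¬ 2 * d ∣ d * (1 : ZMod 2).val + 2 * (0 : ZMod n).val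
  rw [show (1 : ZMod 2).val = 1 from rfl, ZMod.val_zero, mul_one, mul_zero, add_zero]
  intro hdvd
  have := Nat.le_of_dvd (Nat.pos_of_ne_zero hd0) hdvd
  omega

lemma exists_one_mem_SC {d : ℕ} (hd : d ∣ n) (h2 : 2 ∣ d) :
    ((1 : ZMod 2), ((d / 2 : ℕ) : ZMod n)) ∈ SC d hd := by
  rw [mem_SC]
  show 2 * d ∣ d * (1 : ZMod 2).val + 2 * (((d / 2 : ℕ) : ZMod n)).val
  rw [show (1 : ZMod 2).val = 1 from rfl, mul_one, ZMod.val_natCast]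
  have h1 : 2 * (d / 2 % n) ≡ 2 * (d / 2) [MOD 2 * d] :=
    ((Nat.mod_modEq _ n).mul_left' 2).of_dvd (mul_dvd_mul_left 2 hd)
  have h2' : 2 * (d / 2) = d := Nat.mul_div_cancel' h2
  refine Nat.modEq_zero_iff_dvd.1 ?_
  calc d + 2 * (d / 2 % n)
      ≡ d + 2 * (d / 2) [MOD 2 * d] := Nat.ModEq.add_left d h1
    _ = 2 * d := by rw [h2']; ring
    _ ≡ 0 [MOD 2 * d] := Nat.modEq_zero_iff_dvd.2 dvd_rfl

/-- Index type for the families. -/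
def famIdx (n : ℕ) :=
  (↥n.divisors ⊕ ↥n.divisors) ⊕ ↥(n.divisors.filter (fun d => 2 ∣ d))

instance (n : ℕ) : Fintype (famIdx n) := by unfold famIdx; infer_instance

def famMap (n : ℕ) [NeZero n] : famIdx n → AddSubgroup (ZMod 2 × ZMod n)
  | Sum.inl (Sum.inl d) => SA d.1 (Nat.dvd_of_mem_divisors d.2)
  | Sum.inl (Sum.inr d) => SB d.1 (Nat.dvd_of_mem_divisors d.2)
  | Sum.inr d => SC d.1 (Nat.dvd_of_mem_divisors (Finset.mem_filter.1 d.2).1)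

lemma famMap_bijective (n : ℕ) [NeZero n] : Function.Bijective (famMap n) := by
  constructor
  · rintro ((⟨d, hd⟩ | ⟨d, hd⟩) | ⟨d, hd⟩) <;> rintro ((⟨d', hd'⟩ | ⟨d', hd'⟩) | ⟨d', hd'⟩) <;>
      intro h <;> simp only [famMap] at h
    · have hdd : d = d' := SA_inj _ _ h
      subst hdd; rfl
    · -- SA = SB
      exfalso
      have h1 := one_zero_mem_SB (n := n) (Nat.dvd_of_mem_divisors hd')
      rw [← h] at h1
      exact one_zero_not_mem_SA _ h1
    · -- SA = SC
      exfalso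
      have h1 := exists_one_mem_SC (n := n)
        (Nat.dvd_of_mem_divisors (Finset.mem_filter.1 hd').1) (Finset.mem_filter.1 hd').2
      rw [← h] at h1
      have h2 : (1 : ZMod 2) = 0 := ((mem_SA _).1 h1).1
      exact absurd h2 (by decide)
    · -- SB = SA
      exfalso
      have h1 := one_zero_mem_SB (n := n) (Nat.dvd_of_mem_divisors hd)
      rw [h] at h1
      exact one_zero_not_mem_SA _ h1
    · have hdd : d = d' := SB_inj _ _ h
      subst hdd; rfl
    · -- SB = SC
      exfalso
      have h1 := one_zero_mem_SB (n := n) (Nat.dvd_of_mem_divisors hd)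
      rw [h] at h1
      exact one_zero_not_mem_SC _
        (Nat.pos_of_mem_divisors (Finset.mem_filter.1 hd').1).ne' h1
    · -- SC = SA
      exfalso
      have h1 := exists_one_mem_SC (n := n)
        (Nat.dvd_of_mem_divisors (Finset.mem_filter.1 hd).1) (Finset.mem_filter.1 hd).2
      rw [h] at h1
      have h2 : (1 : ZMod 2) = 0 := ((mem_SA _).1 h1).1
      exact absurd h2 (by decide)
    · -- SC = SB
      exfalso
      have h1 := one_zero_mem_SB (n := n) (Nat.dvd_of_mem_divisors hd')
      rw [← h] at h1
      exact one_zero_not_mem_SC _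
        (Nat.pos_of_mem_divisors (Finset.mem_filter.1 hd).1).ne' h1
    · have hdd : d = d' := SC_inj _ _ h
      subst hdd; rfl
  · intro H
    rcases exists_family H with ⟨d, hd, hH⟩ | ⟨d, hd, hH⟩ | ⟨d, hd, h2d, hH⟩
    · exact ⟨Sum.inl (Sum.inl ⟨d, Nat.mem_divisors.2 ⟨hd, NeZero.ne n⟩⟩), hH.symm⟩
    · exact ⟨Sum.inl (Sum.inr ⟨d, Nat.mem_divisors.2 ⟨hd, NeZero.ne n⟩⟩), hH.symm⟩
    · exact ⟨Sum.inr ⟨d, Finset.mem_filter.2 ⟨Nat.mem_divisors.2 ⟨hd, NeZero.ne n⟩, h2d⟩⟩, hH.symm⟩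

theorem card_addSubgroup_two_prod (n : ℕ) [NeZero n] :
    Nat.card (AddSubgroup (ZMod 2 × ZMod n)) =
      2 * n.divisors.card + (n.divisors.filter (fun d => 2 ∣ d)).card := by
  rw [← Nat.card_eq_of_bijective _ (famMap_bijective n), Nat.card_eq_fintype_card]
  show Fintype.card ((↥n.divisors ⊕ ↥n.divisors) ⊕ ↥(n.divisors.filter (fun d => 2 ∣ d))) = _
  simp only [Fintype.card_sum, Fintype.card_coe]
  ring

lemma card_divisors_two_pow_mul (k a : ℕ) (ha : Odd a) :
    (2 ^ k * a).divisors.card = (k + 1) * a.divisors.card := by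
  have hco : Nat.Coprime (2 ^ k) a := Nat.Coprime.pow_left k
    (Nat.prime_two.coprime_iff_not_dvd.mpr (by rw [Nat.odd_iff] at ha; omega))
  rw [Nat.Coprime.card_divisors_mul hco, Nat.divisors_prime_pow Nat.prime_two,
    Finset.card_map, Finset.card_range]

lemma filter_odd_divisors (k a : ℕ) (ha : Odd a) :
    (2 ^ k * a).divisors.filter (fun d => ¬ 2 ∣ d) = a.divisors := by
  have ha0 : a ≠ 0 := by rintro rfl; simp [Nat.odd_iff] at ha
  ext d
  simp only [Finset.mem_filter, Nat.mem_divisors]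
  constructor
  · rintro ⟨⟨hdn, _⟩, hodd⟩
    have hco : Nat.Coprime d (2 ^ k) :=
      Nat.Coprime.pow_right k ((Nat.prime_two.coprime_iff_not_dvd.mpr hodd).symm)
    exact ⟨hco.dvd_of_dvd_mul_left hdn, ha0⟩
  · rintro ⟨hda, _⟩
    refine ⟨⟨hda.mul_left _, by positivity⟩, ?_⟩
    intro h2d
    rw [Nat.odd_iff] at ha
    have := h2d.trans hda
    omega

lemma filter_even_divisors (k a : ℕ) (ha : Odd a) :
    ((2 ^ k * a).divisors.filter (fun d => 2 ∣ d)).card = k * a.divisors.card := by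
  have h := Finset.card_filter_add_card_filter_not
    (s := (2 ^ k * a).divisors) (fun d => 2 ∣ d)
  rw [filter_odd_divisors k a ha, card_divisors_two_pow_mul k a ha] at h
  have h2 : (k + 1) * a.divisors.card = k * a.divisors.card + a.divisors.card := by ring
  omega

/-- If `p` is an odd prime with `p − 1 = 2^k·a`, `a` odd, `k ≥ 1`, and `x` is the number
of positive divisors of `p − 1`, then the number of subgroups of `Z_2 × Z_{p−1}`
(isomorphic to `Aut(Z_{4p})`) equals `(3k+2)·x/(k+1)`; equivalently, it equals
`(3k+2)` times the number of positive divisors of `a`. -/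
theorem card_subgroups_aut_four_p (p : ℕ) (hp : p.Prime) (hodd : p ≠ 2)
    (k a : ℕ) (hk : 1 ≤ k) (ha : Odd a) (hpfact : p - 1 = 2 ^ k * a)
    (x : ℕ) (hx : x = (p - 1).divisors.card) :
    (Nat.card (AddSubgroup (ZMod 2 × ZMod (p - 1))) : ℚ)
        = (3 * k + 2 : ℚ) * x / ((k : ℚ) + 1) ∧
      Nat.card (AddSubgroup (ZMod 2 × ZMod (p - 1))) = (3 * k + 2) * a.divisors.card := by
  have hp3 : 3 ≤ p := by
    have := hp.two_le
    omega
  haveI : NeZero (p - 1) := ⟨by omega⟩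
  have hcard : Nat.card (AddSubgroup (ZMod 2 × ZMod (p - 1)))
      = (3 * k + 2) * a.divisors.card := by
    rw [card_addSubgroup_two_prod (p - 1), hpfact, card_divisors_two_pow_mul k a ha,
      filter_even_divisors k a ha]
    ring
  refine ⟨?_, hcard⟩
  have hxval : x = (k + 1) * a.divisors.card := by
    rw [hx, hpfact, card_divisors_two_pow_mul k a ha]
  rw [hcard, hxval]
  have hk1 : ((k : ℚ) + 1) ≠ 0 := by positivity
  field_simp
  push_cast
  ring
end

section
/- Let n ≥ 1 and let Z_n be the cyclic group of order n. For every subgroup H of Aut(Z_n), the partition of Z_n into H-orbits is the partition of a Schur ring over Z_n, and distinct subgroups of Aut(Z_n) yield distinct orbit partitions. Consequently, the number of automorphic Schur rings over Z_n equals the number of subgroups of Aut(Z_n). -/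
open scoped BigOperators

/-- The *simple quantity* in the rational group algebra `ℚ[G]` associated to a
finite subset `C` of a group `G`, namely `∑ g ∈ C, g`. -/
noncomputable def simpleQuantity {G : Type*} [Group G] (C : Finset G) :
    MonoidAlgebra ℚ G :=
  ∑ g ∈ C, MonoidAlgebra.of ℚ G g

/-- A finite family `P` of subsets of a group `G` is the partition of a **Schur ring**
over `G` if: it is a partition of `G` (no empty classes, each element lies in exactly
one class), `{1}` is a class, the class of inverses of any class is again a class, and
the product (in `ℚ[G]`) of the simple quantities of any two classes is a linear
combination with natural-number coefficients of the simple quantities of the classes. -/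
def IsSchurPartition {G : Type*} [Group G] [DecidableEq G] (P : Finset (Finset G)) : Prop :=
  ∅ ∉ P ∧
  (∀ g : G, ∃! C, C ∈ P ∧ g ∈ C) ∧
  ({1} : Finset G) ∈ P ∧
  (∀ C ∈ P, C.image (·⁻¹) ∈ P) ∧
  ∀ C ∈ P, ∀ D ∈ P, ∃ lam : Finset G → ℕ,
    simpleQuantity C * simpleQuantity D = ∑ E ∈ P, (lam E : ℚ) • simpleQuantity E

/-- `numSchurRings n` is `Ω(n)`, the number of Schur rings over the cyclic group `Z_n`
of order `n` (realized as `Multiplicative (ZMod n)`). -/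
noncomputable def numSchurRings (n : ℕ) : ℕ :=
  Nat.card {P : Finset (Finset (Multiplicative (ZMod n))) // IsSchurPartition P}

/-- The partition of a finite group `G` into the orbits of a subgroup `H` of `Aut(G)`
acting naturally on `G`. -/
noncomputable def orbitPartition {G : Type*} [Group G] [Fintype G] [DecidableEq G]
    (H : Subgroup (MulAut G)) : Finset (Finset G) :=
  Finset.image (fun g => (Set.toFinite (MulAction.orbit H g)).toFinset) Finset.univ


open scoped BigOperators
set_option linter.unusedSectionVars false
open MulAction

section Aux

variable {G : Type*} [Group G] [Fintype G] [DecidableEq G]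

/-- The orbit of `g` under `H ≤ Aut G`, as a finset. -/
noncomputable def orbF (H : Subgroup (MulAut G)) (g : G) : Finset G :=
  (Set.toFinite (MulAction.orbit H g)).toFinset

lemma mem_orbF {H : Subgroup (MulAut G)} {a g : G} :
    a ∈ orbF H g ↔ a ∈ orbit H g := Set.Finite.mem_toFinset _

lemma mem_orbF_iff {H : Subgroup (MulAut G)} {a g : G} :
    a ∈ orbF H g ↔ ∃ h : H, (h : MulAut G) g = a := by
  rw [mem_orbF]
  constructor
  · rintro ⟨h, rfl⟩; exact ⟨h, rfl⟩
  · rintro ⟨h, rfl⟩; exact ⟨h, rfl⟩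

lemma self_mem_orbF {H : Subgroup (MulAut G)} (g : G) : g ∈ orbF H g :=
  mem_orbF.mpr (mem_orbit_self g)

lemma orbF_eq_of_mem {H : Subgroup (MulAut G)} {a g : G} (h : a ∈ orbF H g) :
    orbF H a = orbF H g := by
  have : orbit H a = orbit H g := MulAction.orbit_eq_iff.mpr (mem_orbF.mp h)
  ext x
  simp [mem_orbF, this]

lemma smul_mem_orbF {H : Subgroup (MulAut G)} {a g : G} (ha : a ∈ orbF H g) (h : H) :
    (h : MulAut G) a ∈ orbF H g := by
  obtain ⟨h', rfl⟩ := mem_orbF_iff.mp ha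
  exact mem_orbF_iff.mpr ⟨h * h', rfl⟩

lemma mem_orbitPartition {H : Subgroup (MulAut G)} {C : Finset G} :
    C ∈ orbitPartition H ↔ ∃ g : G, orbF H g = C := by
  simp [orbitPartition, orbF]

lemma orbF_mem_orbitPartition (H : Subgroup (MulAut G)) (g : G) :
    orbF H g ∈ orbitPartition H := mem_orbitPartition.mpr ⟨g, rfl⟩

end Aux
section Schur

variable {G : Type*} [Group G] [Fintype G] [DecidableEq G]

/-- Number of ways to write `x = c * d` with `c ∈ C`, `d ∈ D`. -/
def repCount (C D : Finset G) (x : G) : ℕ :=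
  ((C ×ˢ D).filter fun p => p.1 * p.2 = x).card

lemma repCount_smul (H : Subgroup (MulAut G)) (c₀ d₀ : G) (h : H) (x : G) :
    repCount (orbF H c₀) (orbF H d₀) ((h : MulAut G) x)
      = repCount (orbF H c₀) (orbF H d₀) x := by
  unfold repCount
  apply Finset.card_bij (fun p _ => (((h : MulAut G)).symm p.1, ((h : MulAut G)).symm p.2))
  · rintro ⟨a, b⟩ hp
    simp only [Finset.mem_filter, Finset.mem_product] at hp ⊢
    have h1 := smul_mem_orbF hp.1.1 h⁻¹
    have h2 := smul_mem_orbF hp.1.2 h⁻¹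
    simp only [Subgroup.coe_inv] at h1 h2
    refine ⟨⟨by simpa using h1, by simpa using h2⟩, ?_⟩
    have : ((h : MulAut G)).symm (a * b) = ((h : MulAut G)).symm ((h : MulAut G) x) := by
      rw [hp.2]
    simpa [map_mul] using this
  · rintro ⟨a, b⟩ ha ⟨a', b'⟩ hb hab
    simp only [Prod.mk.injEq] at hab
    have e := ((h : MulAut G)).symm.injective
    exact Prod.ext (e hab.1) (e hab.2)
  · rintro ⟨a, b⟩ hp
    simp only [Finset.mem_filter, Finset.mem_product] at hp
    refine ⟨((h : MulAut G) a, (h : MulAut G) b), ?_, by simp⟩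
    simp only [Finset.mem_filter, Finset.mem_product]
    exact ⟨⟨smul_mem_orbF hp.1.1 h, smul_mem_orbF hp.1.2 h⟩, by rw [← map_mul, hp.2]⟩

lemma repCount_const_on_orbF (H : Subgroup (MulAut G)) (c₀ d₀ g : G) {x y : G}
    (hx : x ∈ orbF H g) (hy : y ∈ orbF H g) :
    repCount (orbF H c₀) (orbF H d₀) x = repCount (orbF H c₀) (orbF H d₀) y := by
  have hxy : y ∈ orbF H x := by rw [orbF_eq_of_mem hx]; exact hy
  obtain ⟨h, rfl⟩ := mem_orbF_iff.mp hxy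
  exact (repCount_smul H c₀ d₀ h x).symm

lemma prod_simpleQuantity (C D : Finset G) :
    simpleQuantity C * simpleQuantity D
      = ∑ x : G, (repCount C D x : ℚ) • simpleQuantity {x} := by
  have h1 : simpleQuantity C * simpleQuantity D
      = ∑ p ∈ C ×ˢ D, MonoidAlgebra.of ℚ G (p.1 * p.2) := by
    unfold simpleQuantity
    rw [Finset.sum_mul_sum, Finset.sum_product]
    simp [map_mul]
  rw [h1, ← Finset.sum_fiberwise_of_maps_to (g := fun p : G × G => p.1 * p.2)
    (t := Finset.univ) (fun p _ => Finset.mem_univ _)]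
  refine Finset.sum_congr rfl fun x _ => ?_
  have : ∀ p ∈ (C ×ˢ D).filter fun p : G × G => p.1 * p.2 = x,
      MonoidAlgebra.of ℚ G (p.1 * p.2) = MonoidAlgebra.of ℚ G x := by
    intro p hp
    rw [(Finset.mem_filter.mp hp).2]
  rw [Finset.sum_congr rfl this, Finset.sum_const]
  simp only [simpleQuantity, Finset.sum_singleton]
  rw [Nat.cast_smul_eq_nsmul]
  rfl

lemma isSchurPartition_orbitPartition (H : Subgroup (MulAut G)) :
    IsSchurPartition (orbitPartition H) := by
  have pdisj : ∀ C ∈ orbitPartition H, ∀ D ∈ orbitPartition H, C ≠ D → Disjoint C D := by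
    rintro C hC D hD hne
    obtain ⟨c, rfl⟩ := mem_orbitPartition.mp hC
    obtain ⟨d, rfl⟩ := mem_orbitPartition.mp hD
    rw [Finset.disjoint_left]
    intro a hac had
    exact hne ((orbF_eq_of_mem hac).symm.trans (orbF_eq_of_mem had))
  refine ⟨?_, ?_, ?_, ?_, ?_⟩
  · intro h
    obtain ⟨g, hg⟩ := mem_orbitPartition.mp h
    exact absurd (hg ▸ self_mem_orbF g) (Finset.notMem_empty g)
  · intro g
    refine ⟨orbF H g, ⟨orbF_mem_orbitPartition H g, self_mem_orbF g⟩, ?_⟩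
    rintro C ⟨hC, hgC⟩
    obtain ⟨a, rfl⟩ := mem_orbitPartition.mp hC
    exact (orbF_eq_of_mem hgC).symm
  · have : orbF H (1 : G) = {1} := by
      ext a
      simp only [Finset.mem_singleton, mem_orbF_iff]
      constructor
      · rintro ⟨h, rfl⟩; simp
      · rintro rfl; exact ⟨1, by simp⟩
    exact this ▸ orbF_mem_orbitPartition H 1
  · intro C hC
    obtain ⟨g, rfl⟩ := mem_orbitPartition.mp hC
    have : (orbF H g).image (·⁻¹) = orbF H g⁻¹ := by
      ext a
      simp only [Finset.mem_image, mem_orbF_iff]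
      constructor
      · rintro ⟨b, ⟨h, rfl⟩, rfl⟩
        exact ⟨h, by rw [map_inv]⟩
      · rintro ⟨h, rfl⟩
        exact ⟨(h : MulAut G) g, ⟨h, rfl⟩, by rw [← map_inv]⟩
    exact this ▸ orbF_mem_orbitPartition H g⁻¹
  · intro C hC D hD
    obtain ⟨c₀, rfl⟩ := mem_orbitPartition.mp hC
    obtain ⟨d₀, rfl⟩ := mem_orbitPartition.mp hD
    set N : G → ℕ := repCount (orbF H c₀) (orbF H d₀) with hN
    refine ⟨fun E => if h : E.Nonempty then N h.choose else 0, ?_⟩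
    rw [prod_simpleQuantity]
    -- rewrite RHS
    have hlam : ∀ E ∈ orbitPartition H,
        (if h : E.Nonempty then (N h.choose : ℚ) else 0) • simpleQuantity E
          = ∑ x ∈ E, (N x : ℚ) • simpleQuantity {x} := by
      intro E hE
      obtain ⟨g, rfl⟩ := mem_orbitPartition.mp hE
      have hne : (orbF H g).Nonempty := ⟨g, self_mem_orbF g⟩
      rw [dif_pos hne]
      unfold simpleQuantity
      rw [Finset.smul_sum]
      refine Finset.sum_congr rfl fun x hx => ?_
      rw [Finset.sum_singleton]
      congr 2
      exact repCount_const_on_orbF H c₀ d₀ g hne.choose_spec hx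
    have hrw : ∑ E ∈ orbitPartition H,
        ((if h : E.Nonempty then N h.choose else 0 : ℕ) : ℚ) • simpleQuantity E
          = ∑ E ∈ orbitPartition H, ∑ x ∈ E, (N x : ℚ) • simpleQuantity {x} := by
      refine Finset.sum_congr rfl fun E hE => ?_
      rw [← hlam E hE]
      split_ifs <;> simp
    rw [hrw]
    -- biUnion
    have hcover : (orbitPartition H).biUnion id = Finset.univ := by
      ext a
      simp only [Finset.mem_biUnion, id, Finset.mem_univ, iff_true]
      exact ⟨orbF H a, orbF_mem_orbitPartition H a, self_mem_orbF a⟩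
    have hdisj : Set.PairwiseDisjoint ((orbitPartition H) : Set (Finset G)) id :=
      fun C hC D hD hne => pdisj C hC D hD hne
    rw [← hcover, Finset.sum_biUnion hdisj]
    rfl

end Schur
section Cyclic

variable (n : ℕ) [NeZero n]

lemma eval_ofAdd_one_injective :
    Function.Injective
      (fun f : MulAut (Multiplicative (ZMod n)) => f (Multiplicative.ofAdd 1)) := by
  intro f g hfg
  simp only at hfg
  refine MulEquiv.ext fun x => ?_
  have hx : x = (Multiplicative.ofAdd (1 : ZMod n)) ^ (Multiplicative.toAdd x).val := by
    rw [← ofAdd_nsmul, nsmul_eq_mul, mul_one, ZMod.natCast_rightInverse, ofAdd_toAdd]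
  rw [hx, map_pow, map_pow, hfg]

lemma orbitPartition_injective :
    Function.Injective
      (fun H : Subgroup (MulAut (Multiplicative (ZMod n))) => orbitPartition H) := by
  intro H₁ H₂ hP
  simp only at hP
  set g₀ := Multiplicative.ofAdd (1 : ZMod n) with hg₀
  have horb : orbF H₁ g₀ = orbF H₂ g₀ := by
    have h1 : orbF H₁ g₀ ∈ orbitPartition H₂ := hP ▸ orbF_mem_orbitPartition H₁ g₀
    obtain ⟨a, ha⟩ := mem_orbitPartition.mp h1
    have hmem : g₀ ∈ orbF H₂ a := ha ▸ self_mem_orbF g₀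
    rw [orbF_eq_of_mem hmem]
    exact ha.symm
  have key : ∀ (H₁ H₂ : Subgroup (MulAut (Multiplicative (ZMod n)))),
      orbF H₁ g₀ = orbF H₂ g₀ → H₁ ≤ H₂ := by
    intro K₁ K₂ ho f hf
    have : (⟨f, hf⟩ : K₁) • g₀ ∈ orbF K₁ g₀ := mem_orbF.mpr (MulAction.mem_orbit _ _)
    rw [ho] at this
    obtain ⟨h', hh'⟩ := mem_orbF_iff.mp this
    have : (h' : MulAut (Multiplicative (ZMod n))) = f :=
      eval_ofAdd_one_injective n (by simpa [Subgroup.smul_def, MulAut.smul_def] using hh')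
    exact this ▸ h'.2
  exact le_antisymm (key H₁ H₂ horb) (key H₂ H₁ horb.symm)

end Cyclic

/-- For every subgroup `H ≤ Aut(Z_n)`, the partition of `Z_n` into `H`-orbits is the
partition of a Schur ring over `Z_n`; distinct subgroups yield distinct orbit
partitions; and hence the number of automorphic Schur rings over `Z_n` equals the
number of subgroups of `Aut(Z_n)`. -/
theorem automorphic_schur_rings (n : ℕ) (hn : 1 ≤ n) :
    haveI : NeZero n := ⟨by omega⟩
    (∀ H : Subgroup (MulAut (Multiplicative (ZMod n))), IsSchurPartition (orbitPartition H)) ∧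
    Function.Injective
      (fun H : Subgroup (MulAut (Multiplicative (ZMod n))) => orbitPartition H) ∧
    Nat.card {P : Finset (Finset (Multiplicative (ZMod n))) //
        ∃ H : Subgroup (MulAut (Multiplicative (ZMod n))), P = orbitPartition H} =
      Nat.card (Subgroup (MulAut (Multiplicative (ZMod n)))) := by
  haveI : NeZero n := ⟨by omega⟩
  refine ⟨fun H => isSchurPartition_orbitPartition H, orbitPartition_injective n, ?_⟩
  exact Nat.card_congr
    ((Equiv.subtypeEquivRight
        (fun P => ⟨fun ⟨H, h⟩ => ⟨H, h.symm⟩, fun ⟨H, h⟩ => ⟨H, h.symm⟩⟩)).trans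
      (Equiv.ofInjective _ (orbitPartition_injective n)).symm)
end

section
/- Let n be a composite positive integer and let S be a Schur ring over the cyclic group Z_n that is primitive, i.e., the only subgroups of Z_n that are unions of classes of the partition of S are the trivial subgroup and Z_n itself. Then S is the trivial Schur ring, whose partition is {{1}, Z_n ∖ {1}}. -/
open scoped BigOperators

namespace SchurAux

open Finset

variable {G : Type*} [CommGroup G] [Fintype G] [DecidableEq G]

/-- The number of ways to write `x = c * d` with `c ∈ C`, `d ∈ D`. -/
def mult (C D : Finset G) (x : G) : ℕ :=
  ((C ×ˢ D).filter fun q => q.1 * q.2 = x).card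

lemma one_le_mult {C D : Finset G} {c d : G} (hc : c ∈ C) (hd : d ∈ D) :
    1 ≤ mult C D (c * d) := by
  apply Finset.card_pos.mpr
  exact ⟨(c, d), by simp [Finset.mem_filter, Finset.mem_product, hc, hd]⟩

lemma mult_pos_elim {C D : Finset G} {x : G} (h : 0 < mult C D x) :
    ∃ c ∈ C, ∃ d ∈ D, c * d = x := by
  obtain ⟨⟨c, d⟩, hq⟩ := Finset.card_pos.mp h
  simp only [Finset.mem_filter, Finset.mem_product] at hq
  exact ⟨c, hq.1.1, d, hq.1.2, hq.2⟩

lemma mult_eq_card_filter (C D : Finset G) (x : G) :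
    mult C D x = (C.filter fun y => y⁻¹ * x ∈ D).card := by
  apply Finset.card_bij (fun q _ => q.1)
  · rintro ⟨c, d⟩ hq
    simp only [Finset.mem_filter, Finset.mem_product] at hq ⊢
    refine ⟨hq.1.1, ?_⟩
    have : c⁻¹ * x = d := by rw [← hq.2]; group
    rw [this]; exact hq.1.2
  · rintro ⟨c, d⟩ hq ⟨c', d'⟩ hq' h
    simp only [Finset.mem_filter, Finset.mem_product] at hq hq'
    dsimp at h
    subst h
    have : d = d' := by
      have h1 := hq.2; have h2 := hq'.2
      exact mul_left_cancel (h1.trans h2.symm)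
    simp [this]
  · intro y hy
    simp only [Finset.mem_filter] at hy
    exact ⟨(y, y⁻¹ * x), by simp [Finset.mem_filter, Finset.mem_product, hy.1, hy.2], rfl⟩

lemma sum_mult (C D : Finset G) : ∑ x : G, mult C D x = C.card * D.card := by
  unfold mult
  rw [← Finset.card_product]
  exact (Finset.card_eq_sum_card_fiberwise (fun q _ => Finset.mem_univ (q.1 * q.2))).symm

lemma mult_one_self_inv (C : Finset G) : mult C (C.image (·⁻¹)) 1 = C.card := by
  unfold mult
  apply Finset.card_bij (fun q _ => q.1)
  · rintro ⟨c, d⟩ hq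
    simp only [Finset.mem_filter, Finset.mem_product] at hq
    exact hq.1.1
  · rintro ⟨c, d⟩ hq ⟨c', d'⟩ hq' h
    simp only [Finset.mem_filter, Finset.mem_product] at hq hq'
    dsimp at h
    subst h
    have hd : d = c⁻¹ := eq_inv_of_mul_eq_one_right hq.2
    have hd' : d' = c⁻¹ := eq_inv_of_mul_eq_one_right hq'.2
    simp [hd, hd']
  · intro c hc
    refine ⟨(c, c⁻¹), ?_, rfl⟩
    simp only [Finset.mem_filter, Finset.mem_product]
    exact ⟨⟨hc, Finset.mem_image.mpr ⟨c, hc, rfl⟩⟩, mul_inv_cancel c⟩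

/-- a representative of a class -/
noncomputable def rep (D : Finset G) : G :=
  if h : D.Nonempty then h.choose else 1

lemma rep_mem {D : Finset G} (h : D.Nonempty) : rep D ∈ D := by
  unfold rep; rw [dif_pos h]; exact h.choose_spec

/-- counts the number of ways to write `g` as a product of `k` elements of `V`. -/
def iterCount (V : Finset G) : ℕ → G → ℕ
  | 0 => fun g => if g = 1 then 1 else 0
  | (k+1) => fun g => ∑ y ∈ V, iterCount V k (y⁻¹ * g)

/-- The data of a Schur partition, digested into combinatorial form. -/
structure Pdata (G : Type*) [CommGroup G] [Fintype G] [DecidableEq G] where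
  P : Finset (Finset G)
  cl : G → Finset G
  cl_mem : ∀ g : G, cl g ∈ P
  mem_cl : ∀ g : G, g ∈ cl g
  eq_cl : ∀ {C : Finset G} {g : G}, C ∈ P → g ∈ C → C = cl g
  one_mem_P : ({1} : Finset G) ∈ P
  inv_mem_P : ∀ C ∈ P, C.image (·⁻¹) ∈ P
  mult_eq : ∀ C ∈ P, ∀ D ∈ P, ∃ lam : Finset G → ℕ, ∀ x, mult C D x = lam (cl x)

namespace Pdata

variable (S : Pdata G)

lemma cl_one : S.cl 1 = {1} := (S.eq_cl S.one_mem_P (Finset.mem_singleton_self 1)).symm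

lemma cl_eq_of_mem {x g : G} (h : g ∈ S.cl x) : S.cl g = S.cl x :=
  (S.eq_cl (S.cl_mem x) h).symm

lemma cl_eq_one_iff {x : G} : S.cl x = {1} ↔ x = 1 :=
  ⟨fun h => Finset.mem_singleton.mp (h ▸ S.mem_cl x),
   fun h => h ▸ S.cl_one⟩

lemma cl_nonempty (x : G) : (S.cl x).Nonempty := ⟨x, S.mem_cl x⟩

lemma cl_inv (x : G) : S.cl x⁻¹ = (S.cl x).image (·⁻¹) :=
  (S.eq_cl (S.inv_mem_P _ (S.cl_mem x)) (Finset.mem_image.mpr ⟨x, S.mem_cl x, rfl⟩)).symm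

lemma mem_cl_inv {x g : G} (h : g ∈ S.cl x) : g⁻¹ ∈ S.cl x⁻¹ := by
  rw [S.cl_inv]; exact Finset.mem_image.mpr ⟨g, h, rfl⟩

/-- A function `G → ℕ` that is constant on the classes of the partition. -/
def PC (f : G → ℕ) : Prop := ∀ x y : G, S.cl x = S.cl y → f x = f y

lemma sum_filter_classes {f : G → ℕ} (hf : S.PC f) (z : G) :
    ∑ D ∈ S.P, (if z ∈ D then f (rep D) else 0) = f z := by
  rw [Finset.sum_eq_single (S.cl z)]
  · rw [if_pos (S.mem_cl z)]
    have hz : rep (S.cl z) ∈ S.cl z := rep_mem (S.cl_nonempty z)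
    exact hf _ _ (S.cl_eq_of_mem hz)
  · intro D hD hne
    rw [if_neg]
    intro hzD
    exact hne (S.eq_cl hD hzD)
  · intro h; exact absurd (S.cl_mem z) h

lemma eq_sum_mult {C : Finset G} (hC : C ∈ S.P) {f : G → ℕ} (hf : S.PC f) (x : G) :
    ∑ y ∈ C, f (y⁻¹ * x) = ∑ D ∈ S.P, (mult C D x) * f (rep D) := by
  calc ∑ y ∈ C, f (y⁻¹ * x)
      = ∑ y ∈ C, ∑ D ∈ S.P, (if y⁻¹ * x ∈ D then f (rep D) else 0) := by
        exact Finset.sum_congr rfl fun y _ => (S.sum_filter_classes hf _).symm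
    _ = ∑ D ∈ S.P, ∑ y ∈ C, (if y⁻¹ * x ∈ D then f (rep D) else 0) := Finset.sum_comm
    _ = ∑ D ∈ S.P, (mult C D x) * f (rep D) := by
        refine Finset.sum_congr rfl fun D _ => ?_
        rw [mult_eq_card_filter, Finset.sum_ite, Finset.sum_const, Finset.sum_const_zero,
          add_zero, smul_eq_mul]

lemma pc_conv_class {f : G → ℕ} (hf : S.PC f) {C : Finset G} (hC : C ∈ S.P) :
    S.PC fun x => ∑ y ∈ C, f (y⁻¹ * x) := by
  intro x x' h
  dsimp only
  rw [S.eq_sum_mult hC hf, S.eq_sum_mult hC hf]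
  refine Finset.sum_congr rfl fun D hD => ?_
  obtain ⟨lam, hlam⟩ := S.mult_eq C hC D hD
  rw [hlam, hlam, h]

lemma pc_conv {f : G → ℕ} (hf : S.PC f) {V : Finset G} (hV : ∀ x ∈ V, S.cl x ⊆ V) :
    S.PC fun x => ∑ y ∈ V, f (y⁻¹ * x) := by
  have hdisj : (↑(S.P.filter (· ⊆ V)) : Set (Finset G)).PairwiseDisjoint id := by
    intro C hC D hD hne
    simp only [Finset.coe_filter, Set.mem_setOf_eq] at hC hD
    simp only [Function.onFun, id_eq]
    rw [Finset.disjoint_left]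
    intro g hgC hgD
    exact hne ((S.eq_cl hC.1 hgC).trans (S.eq_cl hD.1 hgD).symm)
  have hVsplit : V = (S.P.filter (· ⊆ V)).biUnion id := by
    ext y
    simp only [Finset.mem_biUnion, Finset.mem_filter, id]
    constructor
    · intro hy
      exact ⟨S.cl y, ⟨S.cl_mem y, hV y hy⟩, S.mem_cl y⟩
    · rintro ⟨C, ⟨_, hCV⟩, hyC⟩
      exact hCV hyC
  have hsplit : ∀ x : G, ∑ y ∈ V, f (y⁻¹ * x)
      = ∑ C ∈ S.P.filter (· ⊆ V), ∑ y ∈ C, f (y⁻¹ * x) := by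
    intro x
    conv_lhs => rw [hVsplit]
    exact Finset.sum_biUnion hdisj
  intro x x' h
  dsimp only
  rw [hsplit, hsplit]
  refine Finset.sum_congr rfl fun C hC => ?_
  exact S.pc_conv_class hf (Finset.mem_of_mem_filter C hC) x x' h

lemma pc_iterCount {V : Finset G} (hV : ∀ x ∈ V, S.cl x ⊆ V) (k : ℕ) :
    S.PC (iterCount V k) := by
  induction k with
  | zero =>
    intro x y h
    simp only [iterCount]
    by_cases hx : x = 1
    · subst hx
      rw [S.cl_one] at h
      have : y = 1 := (S.cl_eq_one_iff.mp h.symm)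
      simp [this]
    · have hy : y ≠ 1 := by
        intro hy1; subst hy1
        exact hx (S.cl_eq_one_iff.mp (h.trans S.cl_one))
      simp [hx, hy]
  | succ k ih => exact S.pc_conv ih hV

end Pdata

lemma iterCount_zero_eq_one {V : Finset G} {x : G} (h : 0 < iterCount V 0 x) : x = 1 := by
  by_contra hx
  simp [iterCount, hx] at h

lemma iterCount_succ_elim {V : Finset G} {k : ℕ} {x : G} (h : 0 < iterCount V (k+1) x) :
    ∃ y ∈ V, 0 < iterCount V k (y⁻¹ * x) := by
  simp only [iterCount] at h
  obtain ⟨y, hy, hpos⟩ := Finset.exists_ne_zero_of_sum_ne_zero h.ne'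
  exact ⟨y, hy, Nat.pos_of_ne_zero hpos⟩

lemma iterCount_succ_intro {V : Finset G} {k : ℕ} {y x : G} (hy : y ∈ V)
    (h : 0 < iterCount V k (y⁻¹ * x)) : 0 < iterCount V (k+1) x := by
  have : iterCount V k (y⁻¹ * x) ≤ ∑ z ∈ V, iterCount V k (z⁻¹ * x) :=
    Finset.single_le_sum (f := fun z => iterCount V k (z⁻¹ * x))
      (fun _ _ => Nat.zero_le _) hy
  simpa only [iterCount] using lt_of_lt_of_le h this

lemma iterCount_one_of_mem {V : Finset G} {y : G} (hy : y ∈ V) : 0 < iterCount V 1 y :=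
  iterCount_succ_intro hy (by simp [iterCount])

lemma iterCount_add_pos {V : Finset G} :
    ∀ {a : ℕ} {b : ℕ} {x y : G}, 0 < iterCount V a x → 0 < iterCount V b y →
      0 < iterCount V (a + b) (x * y) := by
  intro a
  induction a with
  | zero =>
    intro b x y hx hy
    have : x = 1 := iterCount_zero_eq_one hx
    subst this
    simpa using hy
  | succ a ih =>
    intro b x y hx hy
    obtain ⟨t, ht, hpos⟩ := iterCount_succ_elim hx
    have := ih hpos hy
    have h2 : 0 < iterCount V (a + b + 1) (x * y) := by
      apply iterCount_succ_intro ht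
      have : t⁻¹ * (x * y) = t⁻¹ * x * y := by group
      rw [this]; exact ih hpos hy
    have harith : a + 1 + b = a + b + 1 := by omega
    rwa [harith]

lemma iterCount_inv {V : Finset G} (hsym : ∀ x ∈ V, x⁻¹ ∈ V) :
    ∀ {k : ℕ} {x : G}, 0 < iterCount V k x → ∃ k', 0 < iterCount V k' x⁻¹ := by
  intro k
  induction k with
  | zero =>
    intro x hx
    have : x = 1 := iterCount_zero_eq_one hx
    subst this
    exact ⟨0, by simp [iterCount]⟩
  | succ k ih =>
    intro x hx
    obtain ⟨y, hy, hpos⟩ := iterCount_succ_elim hx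
    obtain ⟨k', hk'⟩ := ih hpos
    refine ⟨k' + 1, ?_⟩
    have hx' : x⁻¹ = (y⁻¹ * x)⁻¹ * y⁻¹ := by group
    rw [hx']
    exact iterCount_add_pos hk' (iterCount_one_of_mem (hsym y hy))

lemma mem_closure_iff_iterCount {V : Finset G} (hsym : ∀ x ∈ V, x⁻¹ ∈ V) (x : G) :
    x ∈ Subgroup.closure (V : Set G) ↔ ∃ k, 0 < iterCount V k x := by
  constructor
  · intro hx
    induction hx using Subgroup.closure_induction with
    | mem y hy => exact ⟨1, iterCount_one_of_mem hy⟩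
    | one => exact ⟨0, by simp [iterCount]⟩
    | mul a b ha hb iha ihb =>
      obtain ⟨k1, h1⟩ := iha
      obtain ⟨k2, h2⟩ := ihb
      exact ⟨k1 + k2, iterCount_add_pos h1 h2⟩
    | inv a ha iha =>
      obtain ⟨k, hk⟩ := iha
      exact iterCount_inv hsym hk
  · rintro ⟨k, hk⟩
    induction k generalizing x with
    | zero =>
      rw [iterCount_zero_eq_one hk]
      exact Subgroup.one_mem _
    | succ k ih =>
      obtain ⟨y, hy, hpos⟩ := iterCount_succ_elim hk
      have h1 : y ∈ Subgroup.closure (V : Set G) := Subgroup.subset_closure hy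
      have h2 := ih _ hpos
      have : x = y * (y⁻¹ * x) := by group
      rw [this]
      exact Subgroup.mul_mem _ h1 h2

namespace Pdata

variable (S : Pdata G)

lemma cl_subset_closure {W : Finset G} (hW : ∀ x ∈ W, S.cl x ⊆ W) :
    ∀ x ∈ Subgroup.closure (W : Set G), ∀ y ∈ S.cl x,
      y ∈ Subgroup.closure (W : Set G) := by
  classical
  set V : Finset G := W ∪ W.image (·⁻¹) with hVdef
  have hVcl : ∀ x ∈ V, S.cl x ⊆ V := by
    intro x hx
    rcases Finset.mem_union.mp hx with h | h
    · exact (hW x h).trans Finset.subset_union_left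
    · obtain ⟨w, hw, rfl⟩ := Finset.mem_image.mp h
      intro z hz
      have hzim : z ∈ (S.cl w).image (·⁻¹) := by rw [← S.cl_inv]; exact hz
      obtain ⟨z', hz'mem, rfl⟩ := Finset.mem_image.mp hzim
      exact Finset.mem_union_right _ (Finset.mem_image.mpr ⟨z', hW w hw hz'mem, rfl⟩)
  have hVsym : ∀ x ∈ V, x⁻¹ ∈ V := by
    intro x hx
    rcases Finset.mem_union.mp hx with h | h
    · exact Finset.mem_union_right _ (Finset.mem_image.mpr ⟨x, h, rfl⟩)
    · obtain ⟨w, hw, rfl⟩ := Finset.mem_image.mp h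
      rw [inv_inv]
      exact Finset.mem_union_left _ hw
  have hclos : Subgroup.closure (V : Set G) = Subgroup.closure (W : Set G) := by
    apply le_antisymm
    · rw [Subgroup.closure_le]
      intro v hv
      rcases Finset.mem_union.mp hv with h | h
      · exact Subgroup.subset_closure h
      · obtain ⟨w, hw, rfl⟩ := Finset.mem_image.mp h
        exact Subgroup.inv_mem _ (Subgroup.subset_closure hw)
    · apply Subgroup.closure_mono
      intro w hw
      exact Finset.mem_union_left _ hw
  intro x hx y hy
  rw [← hclos] at hx ⊢
  rw [mem_closure_iff_iterCount hVsym] at hx ⊢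
  obtain ⟨k, hk⟩ := hx
  refine ⟨k, ?_⟩
  rwa [S.pc_iterCount hVcl k y x (S.cl_eq_of_mem hy)]

lemma closure_classes {W : Finset G} (hW : ∀ x ∈ W, S.cl x ⊆ W) :
    ∃ Q ⊆ S.P, ((Subgroup.closure (W : Set G) : Subgroup G) : Set G)
      = ⋃ C ∈ Q, (C : Set G) := by
  classical
  refine ⟨S.P.filter (fun C => ∀ z ∈ C, z ∈ Subgroup.closure (W : Set G)),
    Finset.filter_subset _ _, ?_⟩
  ext z
  simp only [Set.mem_iUnion, SetLike.mem_coe, Finset.mem_coe, Finset.mem_filter]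
  constructor
  · intro hz
    exact ⟨S.cl z, ⟨S.cl_mem z, fun y hy => S.cl_subset_closure hW z hz y hy⟩, S.mem_cl z⟩
  · rintro ⟨C, ⟨_, hCsub⟩, hzC⟩
    exact hCsub z hzC

end Pdata

end SchurAux

section Rotation

open Finset SchurAux

variable {G : Type*} [CommGroup G] [Fintype G] [DecidableEq G]

lemma card_pi_filter_eq_iterCount (T : Finset G) : ∀ (k : ℕ) (g : G),
    (Finset.univ.filter fun v : Fin k → G => (∀ i, v i ∈ T) ∧ ∏ i, v i = g).card
      = iterCount T k g := by
  intro k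
  induction k with
  | zero =>
    intro g
    by_cases hg : g = 1
    · subst hg
      rw [Finset.filter_true_of_mem]
      · simp only [iterCount, if_pos rfl, Finset.card_univ]
        simp
      · intro v _
        refine ⟨fun i => i.elim0, ?_⟩
        simp
    · rw [Finset.filter_false_of_mem]
      · simp [iterCount, hg]
      · intro v _ h
        exact hg (by rw [← h.2]; simp)
  | succ k ih =>
    intro g
    rw [Finset.card_eq_sum_card_fiberwise
      (f := fun v : Fin (k+1) → G => v 0) (t := Finset.univ) (fun _ _ => Finset.mem_univ _)]
    have hterm : ∀ y : G,
        ((Finset.univ.filter fun v : Fin (k+1) → G => (∀ i, v i ∈ T) ∧ ∏ i, v i = g).filter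
          (fun v => v 0 = y)).card = if y ∈ T then iterCount T k (y⁻¹ * g) else 0 := by
      intro y
      by_cases hy : y ∈ T
      · rw [if_pos hy, ← ih (y⁻¹ * g)]
        refine Finset.card_bij' (fun v _ => Fin.tail v) (fun w _ => Fin.cons y w)
          ?_ ?_ ?_ ?_
        · intro v hv
          simp only [Finset.mem_filter, Finset.mem_univ, true_and] at hv ⊢
          obtain ⟨⟨hmem, hprod⟩, h0⟩ := hv
          constructor
          · intro i; exact hmem i.succ
          · have hps : (∏ i : Fin k, Fin.tail v i) = ∏ i : Fin k, v i.succ := rfl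
            rw [Fin.prod_univ_succ] at hprod
            rw [hps, ← h0, ← hprod]
            group
        · intro w hw
          simp only [Finset.mem_filter, Finset.mem_univ, true_and] at hw ⊢
          obtain ⟨hmem, hprod⟩ := hw
          refine ⟨⟨?_, ?_⟩, ?_⟩
          · intro i
            refine Fin.cases ?_ ?_ i
            · simpa using hy
            · intro j; simpa using hmem j
          · rw [Fin.prod_univ_succ]
            simp only [Fin.cons_zero, Fin.cons_succ]
            rw [show (∏ i : Fin k, w i) = y⁻¹ * g from hprod]
            group
          · simp
        · intro v hv
          simp only [Finset.mem_filter, Finset.mem_univ, true_and] at hv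
          have h0 : v 0 = y := hv.2
          subst h0
          exact Fin.cons_self_tail v
        · intro w _
          funext i
          simp [Fin.tail]
      · rw [if_neg hy]
        rw [Finset.card_eq_zero]
        apply Finset.filter_eq_empty_iff.mpr
        intro v hv
        simp only [Finset.mem_filter, Finset.mem_univ, true_and] at hv
        intro h0
        exact hy (h0 ▸ hv.1 0)
    calc ∑ y : G, ((Finset.univ.filter fun v : Fin (k+1) → G =>
            (∀ i, v i ∈ T) ∧ ∏ i, v i = g).filter (fun v => v 0 = y)).card
        = ∑ y : G, if y ∈ T then iterCount T k (y⁻¹ * g) else 0 := by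
          exact Finset.sum_congr rfl fun y _ => hterm y
      _ = ∑ y ∈ T, iterCount T k (y⁻¹ * g) := by
          rw [Finset.sum_ite_mem, Finset.univ_inter]
      _ = iterCount T (k+1) g := rfl

open Fin.NatCast in
lemma card_pow_filter_modEq (p : ℕ) (hp : p.Prime) (T : Finset G) (g : G) :
    (Finset.univ.filter fun v : Fin p → G => (∀ i, v i ∈ T) ∧ ∏ i, v i = g).card
      ≡ (T.filter fun t => t ^ p = g).card [MOD p] := by
  classical
  obtain ⟨m, rfl⟩ : ∃ m, p = m + 2 := ⟨p - 2, by have := hp.two_le; omega⟩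
  haveI : Fact (m + 2).Prime := ⟨hp⟩
  set σ : Equiv.Perm (Fin (m + 2)) := finRotate (m + 2) with hσ
  have hσpow : ∀ (j : ℕ) (i : Fin (m + 2)), (σ ^ j) i = i + (j : Fin (m+2)) := by
    intro j
    induction j with
    | zero => intro i; simp
    | succ j ihj =>
      intro i
      rw [pow_succ]
      simp only [Equiv.Perm.mul_apply]
      rw [ihj (σ i)]
      have : σ i = i + 1 := finRotate_succ_apply i
      rw [this]
      push_cast
      abel
  have hσorder : orderOf σ = m + 2 := by
    apply orderOf_eq_prime
    · ext i
      rw [hσpow (m+2) i]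
      simp
    · intro h
      have h0 : σ 0 = 0 := by rw [h]; rfl
      have h1 : σ 0 = 1 := by
        have := finRotate_succ_apply (0 : Fin (m+2))
        rw [← hσ] at this
        rw [this, zero_add]
      rw [h0] at h1
      exact zero_ne_one h1
  set A := Subgroup.zpowers σ with hA
  have hApgroup : IsPGroup (m + 2) A := by
    apply IsPGroup.of_card
    rw [Nat.card_eq_fintype_card, Fintype.card_zpowers, hσorder, pow_one]
  set Pred : (Fin (m+2) → G) → Prop := fun v => (∀ i, v i ∈ T) ∧ ∏ i, v i = g with hPred
  letI : SMul A {v : Fin (m+2) → G // Pred v} :=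
    ⟨fun c v => ⟨fun i => v.1 (((c⁻¹ : A) : Equiv.Perm (Fin (m+2))) i),
      ⟨fun i => v.2.1 _, by
        rw [← v.2.2]
        exact Equiv.prod_comp ((c⁻¹ : A) : Equiv.Perm (Fin (m+2))) v.1⟩⟩⟩
  have hsmul_apply : ∀ (c : A) (v : {v : Fin (m+2) → G // Pred v}) (i : Fin (m+2)),
      (c • v).1 i = v.1 (((c⁻¹ : A) : Equiv.Perm (Fin (m+2))) i) := fun _ _ _ => rfl
  letI : MulAction A {v : Fin (m+2) → G // Pred v} :=
    { one_smul := by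
        intro v
        apply Subtype.ext
        funext i
        rw [hsmul_apply]
        simp
      mul_smul := by
        intro a b v
        apply Subtype.ext
        funext i
        rw [hsmul_apply, hsmul_apply, hsmul_apply]
        rw [mul_inv_rev]
        rfl }
  have hmod := hApgroup.card_modEq_card_fixedPoints {v : Fin (m+2) → G // Pred v}
  have hcard1 : Nat.card {v : Fin (m+2) → G // Pred v}
      = (Finset.univ.filter fun v : Fin (m+2) → G => Pred v).card := by
    rw [Nat.card_eq_fintype_card, Fintype.card_subtype]
  -- characterize fixed points
  have hfix : ∀ v : {v : Fin (m+2) → G // Pred v},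
      v ∈ MulAction.fixedPoints A {v : Fin (m+2) → G // Pred v} ↔ ∀ i, v.1 i = v.1 0 := by
    intro v
    constructor
    · intro hv
      have hstep : ∀ i : Fin (m+2), v.1 (i + 1) = v.1 i := by
        intro i
        have hc : (⟨σ, Subgroup.mem_zpowers σ⟩ : A)⁻¹ • v = v := hv _
        have := congrFun (congrArg Subtype.val hc) i
        rw [hsmul_apply] at this
        simp only [inv_inv] at this
        rw [show ((⟨σ, Subgroup.mem_zpowers σ⟩ : A) : Equiv.Perm (Fin (m+2))) i = i + 1
          from finRotate_succ_apply i] at this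
        exact this
      have hnat : ∀ j : ℕ, v.1 (j : Fin (m+2)) = v.1 0 := by
        intro j
        induction j with
        | zero => simp
        | succ j ihj =>
          have : ((j + 1 : ℕ) : Fin (m+2)) = (j : Fin (m+2)) + 1 := by push_cast; ring
          rw [this, hstep, ihj]
      intro i
      have := hnat i.val
      rwa [Fin.cast_val_eq_self i] at this
    · intro hconst c
      apply Subtype.ext
      funext i
      rw [hsmul_apply, hconst, hconst i]
  have hcard2 : Nat.card (MulAction.fixedPoints A {v : Fin (m+2) → G // Pred v})
      = (T.filter fun t => t ^ (m+2) = g).card := by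
    have hEquiv : MulAction.fixedPoints A {v : Fin (m+2) → G // Pred v}
        ≃ {t : G // t ∈ T.filter fun t => t ^ (m+2) = g} := by
      refine
        { toFun := fun x => ⟨x.1.1 0, ?_⟩
          invFun := fun t => ⟨⟨fun _ => t.1, ⟨fun _ => (Finset.mem_filter.mp t.2).1, ?_⟩⟩, ?_⟩
          left_inv := ?_
          right_inv := ?_ }
      · have hconst := (hfix x.1).mp x.2
        rw [Finset.mem_filter]
        refine ⟨x.1.2.1 0, ?_⟩
        have hprod := x.1.2.2
        calc (x.1.1 0) ^ (m + 2)
            = ∏ _i : Fin (m+2), x.1.1 0 := by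
              rw [Finset.prod_const, Finset.card_univ, Fintype.card_fin]
          _ = ∏ i : Fin (m+2), x.1.1 i :=
              Finset.prod_congr rfl fun i _ => (hconst i).symm
          _ = g := hprod
      · rw [Finset.prod_const, Finset.card_univ, Fintype.card_fin]
        exact (Finset.mem_filter.mp t.2).2
      · rw [MulAction.mem_fixedPoints]
        intro c
        apply Subtype.ext
        funext i
        rfl
      · intro x
        apply Subtype.ext
        apply Subtype.ext
        funext i
        exact ((hfix x.1).mp x.2 i).symm
      · intro t
        rfl
    rw [Nat.card_congr hEquiv, Nat.card_eq_fintype_card]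
    exact Fintype.card_coe _
  rw [hcard1, hcard2] at hmod
  exact hmod

end Rotation


namespace SchurAux
namespace Pdata

variable {G : Type*} [CommGroup G] [Fintype G] [DecidableEq G] (S : Pdata G)

open Finset

lemma dvd_card_fiber {p : ℕ} (hp : p.Prime)
    (hprim : ∀ H : Subgroup G,
      (∃ Q ⊆ S.P, (H : Set G) = ⋃ C ∈ Q, (C : Set G)) → H = ⊥ ∨ H = ⊤)
    (hpow : ∃ y : G, ∀ x : G, x ^ p ≠ y)
    {T : Finset G} (hT : T ∈ S.P) {g : G} (hg : g ≠ 1) :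
    p ∣ (T.filter fun t => t ^ p = g).card := by
  by_contra hndvd
  have hVT : ∀ x ∈ T, S.cl x ⊆ T := fun x hx => by rw [← S.eq_cl hT hx]
  have hsub : ∀ y ∈ S.cl g, ∃ x : G, x ^ p = y := by
    intro y hy
    have hPC : iterCount T p y = iterCount T p g :=
      S.pc_iterCount hVT p y g (S.cl_eq_of_mem hy)
    have hy' : (T.filter fun t => t ^ p = y).card ≡ iterCount T p y [MOD p] := by
      have := card_pow_filter_modEq p hp T y
      rw [card_pi_filter_eq_iterCount] at this
      exact this.symm
    have hg' : (T.filter fun t => t ^ p = g).card ≡ iterCount T p g [MOD p] := by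
      have := card_pow_filter_modEq p hp T g
      rw [card_pi_filter_eq_iterCount] at this
      exact this.symm
    have hMod : (T.filter fun t => t ^ p = y).card
        ≡ (T.filter fun t => t ^ p = g).card [MOD p] := by
      refine hy'.trans ?_
      rw [hPC]
      exact hg'.symm
    have hpos : 0 < (T.filter fun t => t ^ p = y).card := by
      rcases Nat.eq_zero_or_pos (T.filter fun t => t ^ p = y).card with h0 | h
      · exfalso
        apply hndvd
        rw [h0] at hMod
        exact (Nat.modEq_zero_iff_dvd).mp hMod.symm
      · exact h
    obtain ⟨t, ht⟩ := Finset.card_pos.mp hpos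
    exact ⟨t, (Finset.mem_filter.mp ht).2⟩
  obtain ⟨Q, hQ, hQeq⟩ := S.closure_classes (W := S.cl g)
    (fun x hx => by rw [← S.cl_eq_of_mem hx])
  rcases hprim _ ⟨Q, hQ, hQeq⟩ with hbot | htop
  · have : g ∈ (⊥ : Subgroup G) := hbot ▸ Subgroup.subset_closure (S.mem_cl g)
    exact hg (Subgroup.mem_bot.mp this)
  · obtain ⟨y0, hy0⟩ := hpow
    have hle : Subgroup.closure ((S.cl g : Finset G) : Set G)
        ≤ (powMonoidHom p : G →* G).range := by
      rw [Subgroup.closure_le]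
      intro y hy
      obtain ⟨x, hx⟩ := hsub y hy
      exact ⟨x, hx⟩
    have hy0mem : y0 ∈ (powMonoidHom p : G →* G).range := hle (htop ▸ Subgroup.mem_top y0)
    obtain ⟨x, hx⟩ := hy0mem
    exact hy0 x hx

lemma sat_mul {p : ℕ} (hp : p.Prime)
    (hprim : ∀ H : Subgroup G,
      (∃ Q ⊆ S.P, (H : Set G) = ⋃ C ∈ Q, (C : Set G)) → H = ⊥ ∨ H = ⊤)
    (hpow : ∃ y : G, ∀ x : G, x ^ p ≠ y)
    (hKcard : (Finset.univ.filter fun x : G => x ^ p = 1).card = p)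
    {T : Finset G} (hT : T ∈ S.P) {t : G} (ht : t ∈ T) (htp : t ^ p ≠ 1)
    {k : G} (hk : k ^ p = 1) : t * k ∈ T := by
  have hdvd := S.dvd_card_fiber hp hprim hpow hT htp
  have hsubset : (T.filter fun x => x ^ p = t ^ p)
      ⊆ (Finset.univ.filter fun x : G => x ^ p = t ^ p) :=
    Finset.filter_subset_filter _ (Finset.subset_univ T)
  have hfib0 : (Finset.univ.filter fun x : G => x ^ p = t ^ p).card
      = (Finset.univ.filter fun x : G => x ^ p = 1).card := by
    apply Finset.card_bij (fun (x : G) _ => t⁻¹ * x)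
    · intro x hx
      simp only [Finset.mem_filter, Finset.mem_univ, true_and] at hx ⊢
      rw [mul_pow, inv_pow, hx, inv_mul_cancel]
    · intro x _ x' _ h
      exact mul_left_cancel h
    · intro y hy
      simp only [Finset.mem_filter, Finset.mem_univ, true_and] at hy
      refine ⟨t * y, ?_, by group⟩
      simp only [Finset.mem_filter, Finset.mem_univ, true_and]
      rw [mul_pow, hy, mul_one]
  have hfib : (Finset.univ.filter fun x : G => x ^ p = t ^ p).card = p :=
    hfib0.trans hKcard
  have hpos : 0 < (T.filter fun x => x ^ p = t ^ p).card :=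
    Finset.card_pos.mpr ⟨t, Finset.mem_filter.mpr ⟨ht, rfl⟩⟩
  have hle : (T.filter fun x => x ^ p = t ^ p).card ≤ p := by
    calc (T.filter fun x => x ^ p = t ^ p).card
        ≤ (Finset.univ.filter fun x : G => x ^ p = t ^ p).card := Finset.card_le_card hsubset
      _ = p := hfib
  have hcardeq : (T.filter fun x => x ^ p = t ^ p).card = p :=
    Nat.le_antisymm hle (Nat.le_of_dvd hpos hdvd)
  have heq : (T.filter fun x => x ^ p = t ^ p)
      = (Finset.univ.filter fun x : G => x ^ p = t ^ p) :=
    Finset.eq_of_subset_of_card_le hsubset (by rw [hcardeq, hfib])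
  have hmem : t * k ∈ (Finset.univ.filter fun x : G => x ^ p = t ^ p) := by
    simp only [Finset.mem_filter, Finset.mem_univ, true_and]
    rw [mul_pow, hk, mul_one]
  rw [← heq] at hmem
  exact (Finset.mem_filter.mp hmem).1

lemma cl_meets_K {p : ℕ} (hp : p.Prime)
    (hprim : ∀ H : Subgroup G,
      (∃ Q ⊆ S.P, (H : Set G) = ⋃ C ∈ Q, (C : Set G)) → H = ⊥ ∨ H = ⊤)
    (hpow : ∃ y : G, ∀ x : G, x ^ p ≠ y)
    (hKcard : (Finset.univ.filter fun x : G => x ^ p = 1).card = p) :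
    ∀ x : G, (S.cl x ∩ (Finset.univ.filter fun z : G => z ^ p = 1)).Nonempty := by
  classical
  set Kf := Finset.univ.filter fun z : G => z ^ p = 1 with hKf
  have hKmem : ∀ z : G, z ∈ Kf ↔ z ^ p = 1 := by
    intro z; rw [hKf]; simp
  set Uset := Finset.univ.filter (fun x : G => S.cl x ∩ Kf = ∅) with hU
  have hUmem : ∀ u : G, u ∈ Uset ↔ S.cl u ∩ Kf = ∅ := by
    intro u; rw [hU]; simp
  have hUinv : ∀ u ∈ Uset, u⁻¹ ∈ Uset := by
    intro u hu
    rw [hUmem] at hu ⊢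
    rw [Finset.eq_empty_iff_forall_notMem] at hu ⊢
    intro z hz
    rw [Finset.mem_inter] at hz
    apply hu z⁻¹
    rw [Finset.mem_inter]
    constructor
    · have hz1 := hz.1
      rw [S.cl_inv] at hz1
      obtain ⟨w, hw, rfl⟩ := Finset.mem_image.mp hz1
      rwa [inv_inv]
    · have hz2 := (hKmem z).mp hz.2
      rw [hKmem, inv_pow, hz2, inv_one]
  have hUc : ∀ u ∈ Uset, ∀ v ∈ S.cl u, v ∈ Uset := by
    intro u hu v hv
    rw [hUmem] at hu ⊢
    rw [S.cl_eq_of_mem hv]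
    exact hu
  have hUK : ∀ u ∈ Uset, ∀ k : G, k ^ p = 1 → u * k ∈ Uset := by
    intro u hu k hk
    have hunotK : u ^ p ≠ 1 := by
      intro h
      rw [hUmem, Finset.eq_empty_iff_forall_notMem] at hu
      exact hu u (Finset.mem_inter.mpr ⟨S.mem_cl u, (hKmem u).mpr h⟩)
    have hsat := S.sat_mul hp hprim hpow hKcard (S.cl_mem u) (S.mem_cl u) hunotK hk
    exact hUc u hu _ hsat
  set Wset := Finset.univ.filter (fun x : G => x ≠ 1 ∧ (S.cl x ∩ Kf).Nonempty) with hW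
  have hWmem : ∀ w : G, w ∈ Wset ↔ (w ≠ 1 ∧ (S.cl w ∩ Kf).Nonempty) := by
    intro w; rw [hW]; simp
  have hWU : ∀ w ∈ Wset, ∀ u ∈ Uset, w * u ∈ Uset := by
    intro w hw u hu
    rw [hWmem] at hw
    have key : S.cl (w * u) ∩ Kf = ∅ := by
      rw [Finset.eq_empty_iff_forall_notMem]
      intro k0 hk0
      rw [Finset.mem_inter] at hk0
      obtain ⟨lam, hlam⟩ := S.mult_eq _ (S.cl_mem w) _ (S.cl_mem u)
      have h1 : 0 < mult (S.cl w) (S.cl u) (w * u) := one_le_mult (S.mem_cl w) (S.mem_cl u)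
      have h2 : mult (S.cl w) (S.cl u) k0 = mult (S.cl w) (S.cl u) (w * u) := by
        rw [hlam, hlam, S.cl_eq_of_mem hk0.1]
      obtain ⟨e, he, f, hf, hef⟩ := mult_pos_elim (h2 ▸ h1)
      have hfU : f ∈ Uset := hUc u hu f hf
      have hfinvU : f⁻¹ ∈ Uset := hUinv f hfU
      have hk0p : k0 ^ p = 1 := (hKmem k0).mp hk0.2
      have heU : e ∈ Uset := by
        have hmem : f⁻¹ * k0 ∈ Uset := hUK _ hfinvU k0 hk0p
        have he' : e = f⁻¹ * k0 := by
          rw [← hef, mul_comm e f, ← mul_assoc, inv_mul_cancel, one_mul]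
        rwa [← he'] at hmem
      rw [hUmem] at heU
      have hecl : S.cl e = S.cl w := S.cl_eq_of_mem he
      rw [hecl] at heU
      obtain ⟨z, hz⟩ := hw.2
      rw [heU] at hz
      exact absurd hz (Finset.notMem_empty z)
    rw [hUmem]
    exact key
  have hpush : ∀ (kk : ℕ) (x : G), 0 < iterCount Wset kk x →
      ∀ u ∈ Uset, x * u ∈ Uset := by
    intro kk
    induction kk with
    | zero =>
      intro x hx u hu
      rw [iterCount_zero_eq_one hx, one_mul]
      exact hu
    | succ kk ih =>
      intro x hx u hu
      obtain ⟨y, hy, hpos⟩ := iterCount_succ_elim hx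
      have h1 : (y⁻¹ * x) * u ∈ Uset := ih _ hpos u hu
      have h2 := hWU y hy _ h1
      rwa [show y * (y⁻¹ * x * u) = x * u by group] at h2
  have hK1 : (1 : G) ∈ Kf := (hKmem 1).mpr (one_pow p)
  have hUempty : Uset = ∅ := by
    rw [Finset.eq_empty_iff_forall_notMem]
    intro u0 hu0
    have hWcl : ∀ x ∈ Wset, S.cl x ⊆ Wset := by
      intro x hx y hy
      rw [hWmem] at hx ⊢
      constructor
      · intro hy1
        subst hy1
        exact hx.1 (S.cl_eq_one_iff.mp ((S.cl_eq_of_mem hy).symm.trans S.cl_one))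
      · rw [S.cl_eq_of_mem hy]; exact hx.2
    have hWsym : ∀ x ∈ Wset, x⁻¹ ∈ Wset := by
      intro x hx
      rw [hWmem] at hx ⊢
      refine ⟨inv_ne_one.mpr hx.1, ?_⟩
      obtain ⟨z, hz⟩ := hx.2
      rw [Finset.mem_inter] at hz
      refine ⟨z⁻¹, Finset.mem_inter.mpr ⟨S.mem_cl_inv hz.1, ?_⟩⟩
      have hz2 := (hKmem z).mp hz.2
      rw [hKmem, inv_pow, hz2, inv_one]
    have hcard2 : 1 < Kf.card := by rw [hKcard]; exact hp.one_lt
    obtain ⟨k1, hk1K, hk1ne⟩ := Finset.exists_mem_ne hcard2 1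
    have hk1W : k1 ∈ Wset := by
      rw [hWmem]
      exact ⟨hk1ne, ⟨k1, Finset.mem_inter.mpr ⟨S.mem_cl k1, hk1K⟩⟩⟩
    obtain ⟨Q, hQ, hQeq⟩ := S.closure_classes hWcl
    rcases hprim _ ⟨Q, hQ, hQeq⟩ with hbot | htop
    · have : k1 ∈ (⊥ : Subgroup G) := hbot ▸ Subgroup.subset_closure hk1W
      exact hk1ne (Subgroup.mem_bot.mp this)
    · have hu0inv : u0⁻¹ ∈ Subgroup.closure (Wset : Set G) := htop ▸ Subgroup.mem_top _
      rw [mem_closure_iff_iterCount hWsym] at hu0inv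
      obtain ⟨kk, hkk⟩ := hu0inv
      have h1U : u0⁻¹ * u0 ∈ Uset := hpush kk _ hkk u0 hu0
      rw [inv_mul_cancel] at h1U
      rw [hUmem, S.cl_one, Finset.eq_empty_iff_forall_notMem] at h1U
      exact h1U 1 (Finset.mem_inter.mpr ⟨Finset.mem_singleton_self 1, hK1⟩)
  intro x
  by_contra hx
  rw [Finset.not_nonempty_iff_eq_empty] at hx
  have : x ∈ Uset := (hUmem x).mpr hx
  rw [hUempty] at this
  exact Finset.notMem_empty x this

end Pdata
end SchurAux

/-- If `n` is composite and `S` is a primitive Schur ring over `Z_n` (i.e. the only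
subgroups of `Z_n` that are unions of classes of the partition of `S` are the trivial
subgroup and the whole group), then `S` is the trivial Schur ring, whose partition is
`{{1}, Z_n ∖ {1}}`. -/
theorem primitive_schur_ring_of_composite_is_trivial (n : ℕ) (h1 : 1 < n)
    (hn : ¬ n.Prime) (P : Finset (Finset (Multiplicative (ZMod n)))) :
    haveI : NeZero n := ⟨by omega⟩
    IsSchurPartition P →
    (∀ H : Subgroup (Multiplicative (ZMod n)),
      (∃ Q ⊆ P, (H : Set (Multiplicative (ZMod n))) = ⋃ C ∈ Q, (C : Set (Multiplicative (ZMod n)))) →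
      H = ⊥ ∨ H = ⊤) →
    P = {({1} : Finset (Multiplicative (ZMod n))), Finset.univ \ {1}} := by
  haveI : NeZero n := ⟨by omega⟩
  intro hP hprim
  classical
  obtain ⟨hne, huniq, hone, hinvP, hmulQ⟩ := hP
  -- the class function
  have cl_def : ∀ g : (Multiplicative (ZMod n)), ∃! C, C ∈ P ∧ g ∈ C := huniq
  set cl : (Multiplicative (ZMod n)) → Finset (Multiplicative (ZMod n)) := fun g => Finset.choose (fun C => g ∈ C) P (cl_def g) with hcldef
  have cl_mem : ∀ g : (Multiplicative (ZMod n)), cl g ∈ P :=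
    fun g => Finset.choose_mem (fun C => g ∈ C) P (cl_def g)
  have mem_cl : ∀ g : (Multiplicative (ZMod n)), g ∈ cl g :=
    fun g => Finset.choose_property (fun C => g ∈ C) P (cl_def g)
  have eq_cl : ∀ {C : Finset (Multiplicative (ZMod n))} {g : (Multiplicative (ZMod n))}, C ∈ P → g ∈ C → C = cl g := by
    intro C g hC hg
    exact ExistsUnique.unique (cl_def g) ⟨hC, hg⟩ ⟨cl_mem g, mem_cl g⟩
  -- the coefficient identity in combinatorial form
  have mult_eq : ∀ C ∈ P, ∀ D ∈ P, ∃ lam : Finset (Multiplicative (ZMod n)) → ℕ,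
      ∀ x, SchurAux.mult C D x = lam (cl x) := by
    intro C hC D hD
    obtain ⟨lam, hlam⟩ := hmulQ C hC D hD
    refine ⟨lam, fun x => ?_⟩
    have hx : (simpleQuantity C * simpleQuantity D).coeff x
        = (∑ E ∈ P, (lam E : ℚ) • simpleQuantity E).coeff x := by
      rw [hlam]
    have hL : (simpleQuantity C * simpleQuantity D).coeff x = (SchurAux.mult C D x : ℚ) := by
      unfold simpleQuantity
      rw [Finset.sum_mul_sum]
      simp_rw [MonoidAlgebra.of_apply, MonoidAlgebra.single_mul_single, one_mul]
      rw [← Finset.sum_product']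
      rw [MonoidAlgebra.coeff_sum, Finsupp.finset_sum_apply]
      unfold SchurAux.mult
      rw [Finset.card_filter]
      push_cast
      refine Finset.sum_congr rfl fun q _ => ?_
      rw [MonoidAlgebra.coeff_single, Finsupp.single_apply]
    have hR : (∑ E ∈ P, (lam E : ℚ) • simpleQuantity E).coeff x = (lam (cl x) : ℚ) := by
      rw [MonoidAlgebra.coeff_sum, Finsupp.finset_sum_apply]
      have hterm : ∀ E ∈ P, ((lam E : ℚ) • simpleQuantity E).coeff x
          = (lam E : ℚ) * (if x ∈ E then 1 else 0) := by
        intro E _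
        rw [MonoidAlgebra.coeff_smul, Finsupp.smul_apply, smul_eq_mul]
        congr 1
        unfold simpleQuantity
        rw [MonoidAlgebra.coeff_sum, Finsupp.finset_sum_apply]
        simp_rw [MonoidAlgebra.of_apply, MonoidAlgebra.coeff_single, Finsupp.single_apply]
        rw [Finset.sum_ite_eq' E x (fun _ => (1 : ℚ))]
      rw [Finset.sum_congr rfl hterm]
      rw [Finset.sum_eq_single (cl x)]
      · rw [if_pos (mem_cl x), mul_one]
      · intro E hE hneq
        rw [if_neg, mul_zero]
        intro hxE
        exact hneq (eq_cl hE hxE)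
      · intro h; exact absurd (cl_mem x) h
    rw [hL, hR] at hx
    exact_mod_cast hx
  -- package as Pdata
  set S : SchurAux.Pdata (Multiplicative (ZMod n)) :=
    { P := P, cl := cl, cl_mem := cl_mem, mem_cl := mem_cl,
      eq_cl := fun hC hg => eq_cl hC hg, one_mem_P := hone, inv_mem_P := hinvP,
      mult_eq := mult_eq } with hSdef
  have cl_eq_of_mem2 : ∀ {x g : Multiplicative (ZMod n)}, g ∈ cl x → cl g = cl x :=
    fun {x g} h => S.cl_eq_of_mem h
  have cl_eq_one_iff2 : ∀ {x : Multiplicative (ZMod n)}, cl x = {1} ↔ x = 1 :=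
    fun {x} => S.cl_eq_one_iff
  have cl_one2 : cl 1 = ({1} : Finset (Multiplicative (ZMod n))) := S.cl_one
  -- the prime
  set p := n.minFac with hpdef
  have hp : p.Prime := Nat.minFac_prime (by omega)
  have hpdvd : p ∣ n := Nat.minFac_dvd n
  set m := n / p with hmdef
  have hnm : p * m = n := Nat.mul_div_cancel' hpdvd
  clear hmdef
  clear_value m
  have hp2 : 2 ≤ p := hp.two_le
  have hm0 : m ≠ 0 := by
    intro h
    rw [h, Nat.mul_zero] at hnm
    omega
  have hm1 : m ≠ 1 := by
    intro h
    rw [h, Nat.mul_one] at hnm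
    exact hn (hnm ▸ hp)
  have hm2 : 2 ≤ m := by omega
  have hpltn : p < n := by
    have h2p : p * 2 ≤ p * m := Nat.mul_le_mul_left p hm2
    rw [hnm] at h2p
    omega
  -- the p-torsion set
  have hchar : ∀ x : (Multiplicative (ZMod n)), x ^ p = 1 ↔ n ∣ p * (Multiplicative.toAdd x).val := by
    intro x
    have h1 : x ^ p = 1 ↔ p • Multiplicative.toAdd x = 0 := by
      constructor
      · intro h
        have h' : Multiplicative.toAdd (x ^ p) = Multiplicative.toAdd 1 := by rw [h]
        rw [toAdd_pow] at h'
        exact h'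
      · intro h
        have h' : Multiplicative.toAdd (x ^ p) = Multiplicative.toAdd 1 := by
          rw [toAdd_pow]
          exact h
        exact Multiplicative.toAdd.injective h'
    rw [h1]
    have h2 : p • Multiplicative.toAdd x
        = ((p * (Multiplicative.toAdd x).val : ℕ) : ZMod n) := by
      conv_lhs => rw [← ZMod.natCast_zmod_val (Multiplicative.toAdd x)]
      rw [nsmul_eq_mul]
      push_cast
      ring
    rw [h2, ZMod.natCast_eq_zero_iff]
  set Kf := Finset.univ.filter (fun x : (Multiplicative (ZMod n)) => x ^ p = 1) with hKf
  have hKmem : ∀ z : (Multiplicative (ZMod n)), z ∈ Kf ↔ z ^ p = 1 := by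
    intro z; rw [hKf]; simp
  have hKcard : Kf.card = p := by
    have hcardbij : Kf.card = (Finset.range p).card := by
      apply Finset.card_bij' (fun x _ => (Multiplicative.toAdd x).val / m)
        (fun k _ => Multiplicative.ofAdd ((k * m : ℕ) : ZMod n))
      · intro x hx
        rw [Finset.mem_range]
        have hvlt : (Multiplicative.toAdd x).val < n := ZMod.val_lt _
        apply Nat.div_lt_of_lt_mul
        rw [Nat.mul_comm m p, hnm]
        exact hvlt
      · intro k hk
        rw [Finset.mem_range] at hk
        rw [hKmem, hchar]
        have hlt : k * m < n := by
          have h1lt : k * m < p * m := by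
            apply Nat.mul_lt_mul_of_lt_of_le hk (le_refl m)
            omega
          rw [hnm] at h1lt
          exact h1lt
        rw [show Multiplicative.toAdd (Multiplicative.ofAdd ((k * m : ℕ) : ZMod n))
          = ((k * m : ℕ) : ZMod n) from rfl]
        rw [ZMod.val_cast_of_lt hlt]
        exact ⟨k, by rw [← hnm]; ring⟩
      · intro x hx
        rw [hKmem, hchar] at hx
        have hmdvd : m ∣ (Multiplicative.toAdd x).val := by
          obtain ⟨t, ht⟩ := hx
          refine ⟨t, ?_⟩
          have hpt : p * (Multiplicative.toAdd x).val = p * (m * t) := by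
            rw [ht, ← hnm]; ring
          exact Nat.eq_of_mul_eq_mul_left hp.pos hpt
        have hdm : (Multiplicative.toAdd x).val / m * m = (Multiplicative.toAdd x).val :=
          Nat.div_mul_cancel hmdvd
        have hval : ((((Multiplicative.toAdd x).val / m * m : ℕ)) : ZMod n)
            = Multiplicative.toAdd x := by
          rw [hdm, ZMod.natCast_zmod_val]
        show Multiplicative.ofAdd _ = x
        rw [hval]
        rfl
      · intro k hk
        rw [Finset.mem_range] at hk
        have hlt : k * m < n := by
          have h1lt : k * m < p * m := by
            apply Nat.mul_lt_mul_of_lt_of_le hk (le_refl m)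
            omega
          rw [hnm] at h1lt
          exact h1lt
        show (Multiplicative.toAdd (Multiplicative.ofAdd ((k * m : ℕ) : ZMod n))).val / m = k
        rw [show Multiplicative.toAdd (Multiplicative.ofAdd ((k * m : ℕ) : ZMod n))
          = ((k * m : ℕ) : ZMod n) from rfl]
        rw [ZMod.val_cast_of_lt hlt]
        exact Nat.mul_div_cancel k (by omega)
    rw [hcardbij, Finset.card_range]
  have hcardG : Fintype.card (Multiplicative (ZMod n)) = n := by
    rw [Fintype.card_multiplicative, ZMod.card]
  -- the power map is not surjective
  have hpow : ∃ y : (Multiplicative (ZMod n)), ∀ x : (Multiplicative (ZMod n)), x ^ p ≠ y := by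
    by_contra hc
    push_neg at hc
    have hsurj : Function.Surjective (fun x : (Multiplicative (ZMod n)) => x ^ p) := fun y => hc y
    have hinj : Function.Injective (fun x : (Multiplicative (ZMod n)) => x ^ p) :=
      Finite.injective_iff_surjective.mpr hsurj
    have hK1 : Kf = {1} := by
      ext x
      rw [hKmem, Finset.mem_singleton]
      constructor
      · intro hxp
        apply hinj
        show x ^ p = 1 ^ p
        rw [hxp, one_pow]
      · rintro rfl; exact one_pow p
    rw [hK1, Finset.card_singleton] at hKcard
    omega
  -- key structural facts
  have hsat : ∀ T ∈ P, ∀ t ∈ T, t ^ p ≠ 1 → ∀ k : (Multiplicative (ZMod n)), k ^ p = 1 → t * k ∈ T :=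
    fun T hT t ht htp k hk => S.sat_mul hp hprim hpow hKcard hT ht htp hk
  have hmeets : ∀ x : (Multiplicative (ZMod n)), (cl x ∩ Kf).Nonempty :=
    fun x => S.cl_meets_K hp hprim hpow hKcard x
  -- per-class inequality
  set P' := P.erase {1} with hP'def
  have hclass_ineq : ∀ E ∈ P', (n - 1) * (E \ Kf).card + E.card ≤ E.card * E.card := by
    intro E hE'
    have hE : E ∈ P := Finset.mem_of_mem_erase hE'
    set Estar := E.image (·⁻¹) with hEstardef
    have hEstarP : Estar ∈ P := hinvP E hE
    obtain ⟨lam, hlam⟩ := mult_eq E hE Estar hEstarP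
    have hlow : ∀ x : (Multiplicative (ZMod n)), x ≠ 1 → (E \ Kf).card ≤ SchurAux.mult E Estar x := by
      intro x hx
      obtain ⟨k0, hk0⟩ := hmeets x
      rw [Finset.mem_inter] at hk0
      have heqm : SchurAux.mult E Estar x = SchurAux.mult E Estar k0 := by
        rw [hlam, hlam, cl_eq_of_mem2 hk0.1]
      rw [heqm]
      have hk0p : k0 ^ p = 1 := (hKmem k0).mp hk0.2
      apply Finset.card_le_card_of_injOn (fun t => (t * k0, t⁻¹))
      · intro t ht
        rw [Finset.mem_coe, Finset.mem_sdiff] at ht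
        have htp : t ^ p ≠ 1 := by
          intro h; exact ht.2 ((hKmem t).mpr h)
        simp only [Finset.mem_coe, SchurAux.mult, Finset.mem_filter, Finset.mem_product]
        refine ⟨⟨hsat E hE t ht.1 htp k0 hk0p, Finset.mem_image.mpr ⟨t, ht.1, rfl⟩⟩, ?_⟩
        rw [mul_comm t k0, mul_assoc, mul_inv_cancel, mul_one]
      · intro t1 _ t2 _ h
        have h2 := congrArg Prod.snd h
        dsimp at h2
        exact inv_injective h2
    have hsum : ∑ x : (Multiplicative (ZMod n)), SchurAux.mult E Estar x = E.card * E.card := by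
      rw [SchurAux.sum_mult, Finset.card_image_of_injective _ inv_injective]
    have hsplit : SchurAux.mult E Estar 1 + ∑ x ∈ Finset.univ.erase 1, SchurAux.mult E Estar x
        = ∑ x : (Multiplicative (ZMod n)), SchurAux.mult E Estar x :=
      Finset.add_sum_erase _ _ (Finset.mem_univ 1)
    have hone_mult : SchurAux.mult E Estar 1 = E.card := SchurAux.mult_one_self_inv E
    have hbound : (n - 1) * (E \ Kf).card
        ≤ ∑ x ∈ Finset.univ.erase 1, SchurAux.mult E Estar x := by
      have hcer : (Finset.univ.erase (1 : (Multiplicative (ZMod n)))).card = n - 1 := by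
        rw [Finset.card_erase_of_mem (Finset.mem_univ 1), Finset.card_univ, hcardG]
      have hb := Finset.card_nsmul_le_sum (Finset.univ.erase (1 : (Multiplicative (ZMod n))))
        (fun x => SchurAux.mult E Estar x) ((E \ Kf).card)
        (fun x hx => hlow x (Finset.ne_of_mem_erase hx))
      rw [hcer] at hb
      simpa [smul_eq_mul] using hb
    calc (n - 1) * (E \ Kf).card + E.card
        ≤ (∑ x ∈ Finset.univ.erase 1, SchurAux.mult E Estar x) + E.card :=
          Nat.add_le_add_right hbound _
      _ = SchurAux.mult E Estar 1 + ∑ x ∈ Finset.univ.erase 1, SchurAux.mult E Estar x := by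
          rw [hone_mult, Nat.add_comm]
      _ = ∑ x : (Multiplicative (ZMod n)), SchurAux.mult E Estar x := hsplit
      _ = E.card * E.card := hsum
  -- partition sums
  have hsum_inter : ∀ X : Finset (Multiplicative (ZMod n)), ∑ E ∈ P, (X ∩ E).card = X.card := by
    intro X
    rw [Finset.card_eq_sum_card_fiberwise (f := cl) (t := P) (fun x _ => cl_mem x)]
    refine Finset.sum_congr rfl fun E hE => ?_
    congr 1
    ext x
    simp only [Finset.mem_filter, Finset.mem_inter]
    constructor
    · rintro ⟨hxX, hxE⟩
      exact ⟨hxX, (eq_cl hE hxE).symm⟩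
    · rintro ⟨hxX, hclE⟩
      exact ⟨hxX, hclE ▸ mem_cl x⟩
  have hsum_card : ∑ E ∈ P, E.card = n := by
    have h := hsum_inter Finset.univ
    simp only [Finset.univ_inter] at h
    rw [h, Finset.card_univ, hcardG]
  have h1K : (1 : (Multiplicative (ZMod n))) ∈ Kf := (hKmem 1).mpr (one_pow p)
  have hKint1 : (Kf ∩ ({1} : Finset (Multiplicative (ZMod n)))).card = 1 := by
    have hKi : Kf ∩ ({1} : Finset (Multiplicative (ZMod n))) = {1} := by
      apply Finset.Subset.antisymm
      · exact Finset.inter_subset_right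
      · intro z hz
        rw [Finset.mem_singleton] at hz
        subst hz
        exact Finset.mem_inter.mpr ⟨h1K, Finset.mem_singleton_self 1⟩
    rw [hKi, Finset.card_singleton]
  have hsum_K : ∑ E ∈ P, (Kf ∩ E).card = p := by rw [hsum_inter, hKcard]
  have hsum_cardP' : ∑ E ∈ P', E.card = n - 1 := by
    have h := Finset.add_sum_erase P (fun E => E.card) hone
    simp only [Finset.card_singleton] at h
    rw [← hP'def] at h
    omega
  have hsum_KP' : ∑ E ∈ P', (Kf ∩ E).card = p - 1 := by
    have h := Finset.add_sum_erase P (fun E => (Kf ∩ E).card) hone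
    simp only [hKint1] at h
    rw [← hP'def] at h
    omega
  have hsum_split : ∀ E : Finset (Multiplicative (ZMod n)), (Kf ∩ E).card + (E \ Kf).card = E.card := by
    intro E
    rw [Finset.inter_comm]
    exact Finset.card_inter_add_card_sdiff E Kf
  have hsum_b : ∑ E ∈ P', (E \ Kf).card = n - p := by
    have h1 : ∑ E ∈ P', ((Kf ∩ E).card + (E \ Kf).card) = ∑ E ∈ P', E.card :=
      Finset.sum_congr rfl fun E _ => hsum_split E
    rw [Finset.sum_add_distrib] at h1
    omega
  -- the maximal class
  have hP'ne : P'.Nonempty := by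
    obtain ⟨x, hxne⟩ := Fintype.exists_ne_of_one_lt_card (by omega : 1 < Fintype.card (Multiplicative (ZMod n))) 1
    refine ⟨cl x, Finset.mem_erase.mpr ⟨?_, cl_mem x⟩⟩
    intro h
    exact hxne (cl_eq_one_iff2.mp h)
  obtain ⟨E0, hE0P', hE0max⟩ := Finset.exists_max_image P' (fun E => E.card) hP'ne
  have hE0P : E0 ∈ P := Finset.mem_of_mem_erase hE0P'
  have htotal : (n - 1) * (n - p) + (n - 1) ≤ E0.card * (n - 1) := by
    calc (n - 1) * (n - p) + (n - 1)
        = ∑ E ∈ P', (n - 1) * (E \ Kf).card + ∑ E ∈ P', E.card := by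
          rw [← Finset.mul_sum, hsum_b, hsum_cardP']
      _ = ∑ E ∈ P', ((n - 1) * (E \ Kf).card + E.card) := (Finset.sum_add_distrib).symm
      _ ≤ ∑ E ∈ P', E.card * E.card := Finset.sum_le_sum hclass_ineq
      _ ≤ ∑ E ∈ P', E0.card * E.card := by
          apply Finset.sum_le_sum
          intro E hE
          exact Nat.mul_le_mul_right _ (hE0max E hE)
      _ = E0.card * (n - 1) := by rw [← Finset.mul_sum, hsum_cardP']
  have hE0big : n - p + 1 ≤ E0.card := by
    have h1 : (n - 1) * (n - p + 1) ≤ (n - 1) * E0.card := by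
      calc (n - 1) * (n - p + 1) = (n - 1) * (n - p) + (n - 1) := by
            rw [Nat.mul_add, Nat.mul_one]
        _ ≤ E0.card * (n - 1) := htotal
        _ = (n - 1) * E0.card := Nat.mul_comm _ _
    exact Nat.le_of_mul_le_mul_left h1 (by omega)
  -- every nontrivial class equals E0
  have huniqueclass : ∀ E ∈ P', E = E0 := by
    intro E1 hE1'
    by_contra hne10
    have hE1P : E1 ∈ P := Finset.mem_of_mem_erase hE1'
    have hE1nempty : E1.Nonempty :=
      Finset.nonempty_iff_ne_empty.mpr (fun h => hne (h ▸ hE1P))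
    have ha1 : 1 ≤ (Kf ∩ E1).card := by
      obtain ⟨x0, hx0⟩ := hE1nempty
      have hclx0 : cl x0 = E1 := (eq_cl hE1P hx0).symm
      obtain ⟨z, hz⟩ := hmeets x0
      rw [hclx0, Finset.mem_inter] at hz
      exact Finset.card_pos.mpr ⟨z, Finset.mem_inter.mpr ⟨hz.2, hz.1⟩⟩
    have hbt : ∃ t ∈ E1, t ∉ Kf := by
      by_contra hall
      push_neg at hall
      set Ksub : Subgroup (Multiplicative (ZMod n)) :=
        { carrier := {x : (Multiplicative (ZMod n)) | x ^ p = 1}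
          one_mem' := one_pow p
          mul_mem' := by
            intro a b ha hb
            rw [Set.mem_setOf_eq] at ha hb ⊢
            rw [mul_pow, ha, hb, one_mul]
          inv_mem' := by
            intro a ha
            rw [Set.mem_setOf_eq] at ha ⊢
            rw [inv_pow, ha, inv_one] } with hKsubdef
      have hE1cl : ∀ x ∈ E1, S.cl x ⊆ E1 := fun x hx => by
        show cl x ⊆ E1
        rw [← eq_cl hE1P hx]
      obtain ⟨Q, hQ, hQeq⟩ := S.closure_classes hE1cl
      rcases hprim _ ⟨Q, hQ, hQeq⟩ with hbot | htop
      · obtain ⟨x0, hx0⟩ := hE1nempty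
        have hx0b : x0 ∈ (⊥ : Subgroup (Multiplicative (ZMod n))) := hbot ▸ Subgroup.subset_closure hx0
        rw [Subgroup.mem_bot] at hx0b
        subst hx0b
        exact (Finset.ne_of_mem_erase hE1') ((eq_cl hE1P hx0).trans cl_one2)
      · have hle : Subgroup.closure (E1 : Set (Multiplicative (ZMod n))) ≤ Ksub := by
          rw [Subgroup.closure_le]
          intro x hx
          exact (hKmem x).mp (hall x hx)
        have hyex : ∃ y : (Multiplicative (ZMod n)), y ∉ Kf := by
          by_contra hally
          push_neg at hally
          have huniv : Kf = Finset.univ := Finset.eq_univ_iff_forall.mpr hally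
          rw [huniv, Finset.card_univ, hcardG] at hKcard
          omega
        obtain ⟨y, hy⟩ := hyex
        have hyK : y ∈ Ksub := hle (htop ▸ Subgroup.mem_top y)
        exact hy ((hKmem y).mpr hyK)
    obtain ⟨t, htE1, htK⟩ := hbt
    have hb1 : p ≤ (E1 \ Kf).card := by
      rw [← hKcard]
      apply Finset.card_le_card_of_injOn (fun k => t * k)
      · intro k hk
        rw [Finset.mem_coe, Finset.mem_sdiff]
        have hkp := (hKmem k).mp hk
        have htp : t ^ p ≠ 1 := fun h => htK ((hKmem t).mpr h)
        refine ⟨hsat E1 hE1P t htE1 htp k hkp, ?_⟩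
        intro hmm
        have hmp := (hKmem _).mp hmm
        rw [mul_pow, hkp, mul_one] at hmp
        exact htp hmp
      · intro a _ b _ h
        exact mul_left_cancel h
    have hE1big : p + 1 ≤ E1.card := by
      have h := hsum_split E1
      omega
    have hdistinct1 : ({1} : Finset (Multiplicative (ZMod n))) ≠ E0 := (Finset.ne_of_mem_erase hE0P').symm
    have hdistinct2 : ({1} : Finset (Multiplicative (ZMod n))) ≠ E1 := (Finset.ne_of_mem_erase hE1').symm
    have hsub3 : ({({1} : Finset (Multiplicative (ZMod n))), E0, E1} : Finset (Finset (Multiplicative (ZMod n)))) ⊆ P := by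
      intro C hC
      simp only [Finset.mem_insert, Finset.mem_singleton] at hC
      rcases hC with rfl | rfl | rfl
      exacts [hone, hE0P, hE1P]
    have hsum3 : 1 + (E0.card + E1.card) ≤ n := by
      have hsumeq : ∑ E ∈ ({({1} : Finset (Multiplicative (ZMod n))), E0, E1} : Finset (Finset (Multiplicative (ZMod n)))), E.card
          = 1 + (E0.card + E1.card) := by
        rw [Finset.sum_insert (by
            simp only [Finset.mem_insert, Finset.mem_singleton]
            push_neg
            exact ⟨hdistinct1, hdistinct2⟩),
          Finset.sum_insert (by
            rw [Finset.mem_singleton]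
            exact fun h => hne10 h.symm),
          Finset.sum_singleton, Finset.card_singleton]
      calc 1 + (E0.card + E1.card)
          = ∑ E ∈ ({({1} : Finset (Multiplicative (ZMod n))), E0, E1} :
              Finset (Finset (Multiplicative (ZMod n)))), E.card := hsumeq.symm
        _ ≤ ∑ E ∈ P, E.card := Finset.sum_le_sum_of_subset hsub3
        _ = n := hsum_card
    omega
  -- conclude
  have hE0eq : E0 = Finset.univ \ {1} := by
    apply Finset.Subset.antisymm
    · intro y hy
      rw [Finset.mem_sdiff]
      refine ⟨Finset.mem_univ y, ?_⟩
      rw [Finset.mem_singleton]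
      intro h1y
      subst h1y
      exact (Finset.ne_of_mem_erase hE0P') ((eq_cl hE0P hy).trans cl_one2)
    · intro x hx
      rw [Finset.mem_sdiff, Finset.mem_singleton] at hx
      have hclx : cl x ∈ P' := Finset.mem_erase.mpr
        ⟨fun h => hx.2 (cl_eq_one_iff2.mp h), cl_mem x⟩
      rw [← huniqueclass _ hclx]
      exact mem_cl x
  ext C
  simp only [Finset.mem_insert, Finset.mem_singleton]
  constructor
  · intro hC
    by_cases h : C = ({1} : Finset (Multiplicative (ZMod n)))
    · exact Or.inl h
    · exact Or.inr ((huniqueclass C (Finset.mem_erase.mpr ⟨h, hC⟩)).trans hE0eq)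
  · rintro (rfl | rfl)
    · exact hone
    · rw [← hE0eq]
      exact hE0P
end
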